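/- arXiv:2605.25684 — 6 statements merged into one kernel-verified Lean document; each statement's English description precedes it below -/
import Mathlib

section
/- Let A and B be lower triangular infinite complex matrices and suppose there is a lower triangular matrix C with CA = B such that the pair (A,B) satisfies property (*C). Then for every locally convex Hausdorff topological vector space E over ℂ, every A-bounded sequence 𝒯 of continuous linear operators on E is B-bounded. -/
open Filter Finset Topology ZeroAtInfty
open scoped ENNReal ComplexOrder

noncomputable section

/-- An infinite matrix of complex numbers, with rows and columns indexed by `ℕ`. -/
abbrev Mat : Type := ℕ → ℕ → ℂ

/-- `A` is lower triangular: `A n k = 0` whenever `k > n`. -/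
def Mat.LowerTri (A : Mat) : Prop := ∀ n k : ℕ, n < k → A n k = 0

/-- The product of two (lower triangular) infinite matrices; for lower triangular
matrices all the sums involved are finite. -/
def Mat.mul (C A : Mat) : Mat := fun n k => ∑ j ∈ Finset.range (n + 1), C n j * A j k

/-- The identity matrix. -/
def Mat.one : Mat := fun n k => if n = k then 1 else 0

/-- The matrix `Δ`, with `Δ n n = 1`, `Δ n (n-1) = -1` (for `n ≥ 1`) and `0` elsewhere. -/
def Mat.delta : Mat := fun n i => (if n = i then 1 else 0) - (if n = i + 1 then 1 else 0)

/-- The `n`-th absolute row sum `∑_{i=0}^{n} |c_{ni}|` of a lower triangular matrix. -/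
def Mat.rowSum (C : Mat) (n : ℕ) : ℝ := ∑ i ∈ Finset.range (n + 1), ‖C n i‖

/-- Property (*C): the absolute row sums of `C` are (uniformly) bounded. -/
def Mat.StarC (C : Mat) : Prop := ∃ K : ℝ, ∀ n : ℕ, C.rowSum n ≤ K

/-- Property (*2C): (*C) together with: every column of `C` tends to `0`. -/
def Mat.Star2C (C : Mat) : Prop :=
  C.StarC ∧ ∀ i : ℕ, Tendsto (fun n => C n i) atTop (𝓝 (0 : ℂ))

/-- Property (*3C): the absolute row sums of `C` tend to `0`. -/
def Mat.Star3C (C : Mat) : Prop := Tendsto (fun n => C.rowSum n) atTop (𝓝 (0 : ℝ))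

/-- The pair `(A, B)` satisfies (*C): there is a lower triangular `C` with `CA = B`
whose absolute row sums are bounded. -/
def PairStarC (A B : Mat) : Prop := ∃ C : Mat, C.LowerTri ∧ Mat.mul C A = B ∧ C.StarC

/-- The pair `(A, B)` satisfies (*2C). -/
def PairStar2C (A B : Mat) : Prop := ∃ C : Mat, C.LowerTri ∧ Mat.mul C A = B ∧ C.Star2C

/-- The pair `(A, B)` satisfies (*3C). -/
def PairStar3C (A B : Mat) : Prop := ∃ C : Mat, C.LowerTri ∧ Mat.mul C A = B ∧ C.Star3C

/-- A probability matrix: lower triangular, nonnegative (real) entries, rows summing to `1`. -/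
def Mat.IsProb (A : Mat) : Prop :=
  A.LowerTri ∧ (∀ n k : ℕ, 0 ≤ A n k) ∧ ∀ n : ℕ, (∑ i ∈ Finset.range (n + 1), A n i) = 1

/-- The action of a lower triangular matrix on a sequence: `(Cx)_n = ∑_{i=0}^n c_{ni} x_i`. -/
def Mat.apply (C : Mat) (x : ℕ → ℂ) (n : ℕ) : ℂ := ∑ i ∈ Finset.range (n + 1), C n i * x i

section Ops

variable {E : Type*} [AddCommGroup E] [Module ℂ E] [UniformSpace E]
  [IsUniformAddGroup E] [ContinuousSMul ℂ E]

/-- `(A𝒯)_n = ∑_{i=0}^{n} a_{ni} T_i` for a sequence `𝒯` of continuous linear operators. -/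
def matOp (A : Mat) (T : ℕ → E →L[ℂ] E) (n : ℕ) : E →L[ℂ] E :=
  ∑ i ∈ Finset.range (n + 1), A n i • T i

/-- The sequence `𝒯` is `A`-bounded: `{(A𝒯)_n : n ∈ ℕ}` is equicontinuous. -/
def MatBounded (A : Mat) (T : ℕ → E →L[ℂ] E) : Prop :=
  Equicontinuous fun n => ⇑(matOp A T n)

/-- The sequence `𝒯` is `A`-null: `(A𝒯)_n x → 0` for every `x`. -/
def MatNull (A : Mat) (T : ℕ → E →L[ℂ] E) : Prop :=
  ∀ x : E, Tendsto (fun n => matOp A T n x) atTop (𝓝 (0 : E))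

/-- The sequence `𝒯` is `A`-ergodic: `(A𝒯)_n` converges pointwise to a continuous
linear operator `P`. -/
def MatErgodic (A : Mat) (T : ℕ → E →L[ℂ] E) : Prop :=
  ∃ P : E →L[ℂ] E, ∀ x : E, Tendsto (fun n => matOp A T n x) atTop (𝓝 (P x))

/-- `(AT)_n = ∑_{i=0}^{n} a_{ni} T^i` for a single operator `T`. -/
def matOpPow (A : Mat) (T : E →L[ℂ] E) (n : ℕ) : E →L[ℂ] E :=
  matOp A (fun i => T ^ i) n

/-- A single operator `T` is `A`-bounded if the sequence of its powers is. -/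
def OpBounded (A : Mat) (T : E →L[ℂ] E) : Prop := MatBounded A fun i => T ^ i

/-- A single operator `T` is `A`-null if the sequence of its powers is. -/
def OpNull (A : Mat) (T : E →L[ℂ] E) : Prop := MatNull A fun i => T ^ i

/-- A single operator `T` is `A`-ergodic if the sequence of its powers is. -/
def OpErgodic (A : Mat) (T : E →L[ℂ] E) : Prop := MatErgodic A fun i => T ^ i

end Ops

/-- `S(n, p) = ∑_{i=1}^{n} i^p`. -/
def Sp (p : ℝ) (n : ℕ) : ℝ := ∑ i ∈ Finset.range n, ((i : ℝ) + 1) ^ p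

/-- The probability matrix `M_p`, reindexed so that rows and columns start at `0`
(entry `(n, i)` here corresponds to entry `(n+1, i+1)` in the paper). -/
def Mp (p : ℝ) : Mat := fun n i =>
  if i ≤ n then ((((i : ℝ) + 1) ^ p / Sp p (n + 1) : ℝ) : ℂ) else 0

/-- The (lower triangular) inverse of `M_p`. -/
def MpInv (p : ℝ) : Mat := fun n i =>
  if i = n then ((Sp p (n + 1) / ((n : ℝ) + 1) ^ p : ℝ) : ℂ)
  else if i + 1 = n then ((-(Sp p n) / ((n : ℝ) + 1) ^ p : ℝ) : ℂ)
  else 0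

/-- The Banach space `ℓ∞` of bounded complex sequences with the sup norm. -/
abbrev ellInf : Type := ↥(lp (fun _ : ℕ => ℂ) ∞)

/-- The Banach space `c₀` of complex sequences tending to `0`, with the sup norm. -/
abbrev czero : Type := C₀(ℕ, ℂ)

open scoped Pointwise

lemma convex_sum_le_one_mem {E : Type} [AddCommGroup E] [Module ℝ E] {V : Set E}
    (hconv : Convex ℝ V) (h0 : (0:E) ∈ V) (n : ℕ) (t : ℕ → ℝ) (ht : ∀ i, 0 ≤ t i)
    (hsum : ∑ i ∈ Finset.range (n+1), t i ≤ 1) (u : ℕ → E) (hu : ∀ i, u i ∈ V) :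
    ∑ i ∈ Finset.range (n+1), t i • u i ∈ V := by
  set t' : ℕ → ℝ := fun i => if i = n+1 then 1 - ∑ i ∈ Finset.range (n+1), t i else t i with ht'
  set u' : ℕ → E := fun i => if i = n+1 then 0 else u i with hu'
  have hsum' : ∑ i ∈ Finset.range (n+1), t' i = ∑ i ∈ Finset.range (n+1), t i := by
    apply Finset.sum_congr rfl
    intro i hi
    simp only [Finset.mem_range] at hi
    simp [ht', Nat.ne_of_lt hi]
  have hsumeq : ∑ i ∈ Finset.range (n+1), t' i • u' i = ∑ i ∈ Finset.range (n+1), t i • u i := by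
    apply Finset.sum_congr rfl
    intro i hi
    simp only [Finset.mem_range] at hi
    simp [ht', hu', Nat.ne_of_lt hi]
  have key := hconv.sum_mem (t := Finset.range (n+2)) (w := t') (z := u') ?_ ?_ ?_
  · have hz : u' (n+1) = 0 := by simp [hu']
    rw [Finset.sum_range_succ, hsumeq, hz, smul_zero, add_zero] at key
    exact key
  · intro i _
    by_cases h : i = n+1
    · simp [ht', h, hsum]
    · simpa [ht', h] using ht i
  · rw [Finset.sum_range_succ, hsum']
    simp [ht']
  · intro i _
    by_cases h : i = n+1
    · simp [hu', h, h0]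
    · simpa [hu', h] using hu i

lemma key_mem {E : Type} [AddCommGroup E] [Module ℂ E] {V : Set E}
    (hbal : Balanced ℂ V) (hconv : Convex ℝ V) (h0 : (0:E) ∈ V)
    {K : ℝ} (hK : 0 < K) (n : ℕ) (c : ℕ → ℂ)
    (hc : ∑ j ∈ Finset.range (n+1), ‖c j‖ ≤ K) (v : ℕ → E) (hv : ∀ j, v j ∈ V) :
    ∑ j ∈ Finset.range (n+1), c j • v j ∈ ((K:ℂ)) • V := by
  have hKne : ((K:ℂ)) ≠ 0 := by exact_mod_cast ne_of_gt hK
  set u : ℕ → E := fun j => if h : c j = 0 then 0 else ((c j) / (‖c j‖:ℂ)) • v j with hu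
  have hureq : ∀ j, c j • v j = (‖c j‖ : ℝ) • u j := by
    intro j
    by_cases h : c j = 0
    · simp [hu, h]
    · have hn : (‖c j‖ : ℂ) ≠ 0 := by simpa using h
      show c j • v j = ((‖c j‖ : ℝ) : ℂ) • u j
      simp only [hu, dif_neg h, smul_smul]
      congr 1
      rw [mul_div_assoc']
      rw [mul_comm]
      rw [mul_div_assoc, div_self hn, mul_one]
  have humem : ∀ j, u j ∈ V := by
    intro j
    by_cases h : c j = 0
    · simpa [hu, h] using h0
    · have hn : ‖(c j) / (‖c j‖:ℂ)‖ ≤ 1 := by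
        rw [norm_div]
        simp [h, div_self, norm_ne_zero_iff.mpr h]
      simpa [hu, h] using hbal.smul_mem hn (hv j)
  rw [Set.mem_smul_set_iff_inv_smul_mem₀ hKne]
  have : ((K:ℂ))⁻¹ • ∑ j ∈ Finset.range (n+1), c j • v j
      = ∑ j ∈ Finset.range (n+1), (K⁻¹ * ‖c j‖ : ℝ) • u j := by
    rw [Finset.smul_sum]
    apply Finset.sum_congr rfl
    intro j _
    rw [hureq j]
    show ((K:ℂ))⁻¹ • (((‖c j‖:ℝ):ℂ) • u j) = ((K⁻¹ * ‖c j‖ : ℝ):ℂ) • u j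
    rw [smul_smul]
    push_cast
    ring_nf
  rw [this]
  apply convex_sum_le_one_mem hconv h0
  · intro i
    positivity
  · rw [← Finset.mul_sum]
    rw [inv_mul_le_iff₀ hK, mul_one]
    exact hc
  · exact humem

lemma matOp_mul {E : Type} [AddCommGroup E] [Module ℂ E] [UniformSpace E]
    [IsUniformAddGroup E] [ContinuousSMul ℂ E] (C A : Mat) (hA : A.LowerTri)
    (T : ℕ → E →L[ℂ] E) (n : ℕ) :
    matOp (Mat.mul C A) T n = ∑ j ∈ Finset.range (n+1), C n j • matOp A T j := by
  unfold matOp Mat.mul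
  have step1 : ∀ j ∈ Finset.range (n+1),
      (∑ i ∈ Finset.range (j+1), A j i • T i) = ∑ k ∈ Finset.range (n+1), A j k • T k := by
    intro j hj
    simp only [Finset.mem_range] at hj
    apply Finset.sum_subset
    · exact Finset.range_subset_range.mpr hj
    · intro k _ hk
      simp only [Finset.mem_range, not_lt] at hk
      rw [hA j k (by omega), zero_smul]
  calc (∑ k ∈ Finset.range (n+1), (∑ j ∈ Finset.range (n+1), C n j * A j k) • T k)
      = ∑ k ∈ Finset.range (n+1), ∑ j ∈ Finset.range (n+1), (C n j * A j k) • T k := by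
        refine Finset.sum_congr rfl fun k _ => ?_
        rw [Finset.sum_smul]
    _ = ∑ j ∈ Finset.range (n+1), ∑ k ∈ Finset.range (n+1), (C n j * A j k) • T k :=
        Finset.sum_comm
    _ = ∑ j ∈ Finset.range (n+1), C n j • ∑ k ∈ Finset.range (n+1), A j k • T k := by
        refine Finset.sum_congr rfl fun j _ => ?_
        rw [Finset.smul_sum]
        exact Finset.sum_congr rfl fun k _ => (smul_smul _ _ _).symm
    _ = ∑ j ∈ Finset.range (n+1), C n j • ∑ i ∈ Finset.range (j+1), A j i • T i := by
        refine Finset.sum_congr rfl fun j hj => ?_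
        rw [← step1 j hj]

/-- If `(A, B)` satisfies (*C), then every `A`-bounded sequence of continuous linear
operators on a locally convex Hausdorff space is `B`-bounded. -/
theorem statement0 (A B C : Mat) (hA : A.LowerTri) (hB : B.LowerTri) (hC : C.LowerTri)
    (hCA : Mat.mul C A = B) (hStar : C.StarC) :
    ∀ (E : Type) [AddCommGroup E] [Module ℂ E] [UniformSpace E] [IsUniformAddGroup E]
      [ContinuousSMul ℂ E] [LocallyConvexSpace ℝ E] [T2Space E],
      ∀ T : ℕ → E →L[ℂ] E, MatBounded A T → MatBounded B T := by
  intro E _ _ _ _ _ _ _ T hT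
  obtain ⟨K0, hK0⟩ := hStar
  set K : ℝ := max K0 1 with hKdef
  have hKpos : (0:ℝ) < K := lt_of_lt_of_le one_pos (le_max_right _ _)
  have hrow : ∀ n, ∑ i ∈ Finset.range (n+1), ‖C n i‖ ≤ K :=
    fun n => le_trans (hK0 n) (le_max_left _ _)
  have hKne : ((K:ℂ)) ≠ 0 := by exact_mod_cast ne_of_gt hKpos
  show Equicontinuous fun n => ⇑(matOp B T n)
  apply equicontinuous_of_equicontinuousAt_zero (fun n => matOp B T n)
  intro U hU
  rw [uniformity_eq_comap_nhds_zero E] at hU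
  obtain ⟨V, hV, hVU⟩ := hU
  obtain ⟨W, ⟨hWnhds, hWbal, hWconv⟩, hWV⟩ :
      ∃ W : Set E, (W ∈ 𝓝 (0:E) ∧ Balanced ℂ W ∧ Convex ℝ W) ∧ W ⊆ V := by
    obtain ⟨S, ⟨hS, hSconv⟩, hSV⟩ := (LocallyConvexSpace.convex_basis_zero ℝ E).mem_iff.mp hV
    have hSconvC : Convex ℂ S :=
      convex_of_nonneg_surjective_algebraMap (halg := fun _ hz => by
          obtain ⟨x, hx, rfl⟩ := (RCLike.nonneg_iff_exists_ofReal (K := ℂ)).mp (Set.mem_Ici.mp hz); exact ⟨x, hx, rfl⟩)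
        (hs := hSconv)
    exact ⟨convexHull ℂ (balancedCore ℂ S),
      ⟨mem_of_superset (balancedCore_mem_nhds_zero hS) (subset_convexHull ℂ _),
        (balancedCore_balanced S).convexHull, (convex_convexHull ℂ _).lift ℝ⟩,
      (convexHull_min (balancedCore_subset S) hSconvC).trans hSV⟩
  have hW0 : (0:E) ∈ W := mem_of_mem_nhds hWnhds
  have hsm : ((K:ℂ))⁻¹ • W ∈ 𝓝 (0:E) := by
    rw [set_smul_mem_nhds_zero_iff (inv_ne_zero hKne)]
    exact hWnhds
  have hTat := hT 0 ((fun p : E × E => p.2 - p.1) ⁻¹' (((K:ℂ))⁻¹ • W)) ?_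
  swap
  · rw [uniformity_eq_comap_nhds_zero E]
    exact preimage_mem_comap hsm
  filter_upwards [hTat] with x hx
  intro n
  apply hVU
  have hmem : ∀ j, matOp A T j x ∈ ((K:ℂ))⁻¹ • W := by
    intro j
    have := hx j
    simpa [map_zero] using this
  choose w hw hws using fun j => hmem j
  have hcomp : matOp B T n x = ((K:ℂ))⁻¹ • ∑ j ∈ Finset.range (n+1), C n j • w j := by
    rw [← hCA, matOp_mul C A hA T n]
    rw [ContinuousLinearMap.sum_apply]
    rw [Finset.smul_sum]
    apply Finset.sum_congr rfl
    intro j _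
    rw [ContinuousLinearMap.smul_apply, ← hws j, smul_smul, smul_smul, mul_comm]
  have hsum : ∑ j ∈ Finset.range (n+1), C n j • w j ∈ ((K:ℂ)) • W :=
    key_mem hWbal hWconv hW0 hKpos n (fun j => C n j) (hrow n) w hw
  obtain ⟨y, hy, hyeq⟩ := hsum
  show matOp B T n x - matOp B T n 0 ∈ V
  apply hWV
  rw [map_zero, sub_zero, hcomp, ← hyeq, smul_smul, inv_mul_cancel₀ hKne, one_smul]
  exact hy
end
end

section
/- Let A and B be lower triangular infinite complex matrices and suppose there is a lower triangular matrix C with CA = B such that the pair (A,B) satisfies property (*2C). Then for every locally convex Hausdorff topological vector space E over ℂ, every A-null sequence 𝒯 of continuous linear operators on E is B-null. -/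
open Filter Finset Topology ZeroAtInfty
open scoped ENNReal ComplexOrder

noncomputable section

/-- The key real-valued lemma: if row sums of `C` are bounded, columns of `C` tend to
`0`, and `g j → 0` with `g j ≥ 0`, then `∑_{j≤n} ‖C n j‖ g j → 0`. -/
lemma aux_real (C : Mat) (K : ℝ) (hK : ∀ n, C.rowSum n ≤ K)
    (hcol : ∀ i, Tendsto (fun n => C n i) atTop (𝓝 (0 : ℂ)))
    (g : ℕ → ℝ) (hg0 : ∀ j, 0 ≤ g j) (hg : Tendsto g atTop (𝓝 0)) :
    Tendsto (fun n => ∑ j ∈ Finset.range (n + 1), ‖C n j‖ * g j) atTop (𝓝 0) := by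
  rw [Metric.tendsto_atTop]
  intro ε hε
  set K' : ℝ := max K 1 with hK'
  have hK'pos : 0 < K' := lt_of_lt_of_le one_pos (le_max_right _ _)
  have hKK' : K ≤ K' := le_max_left _ _
  -- tail bound on g
  have hg' := Metric.tendsto_atTop.mp hg (ε / (2 * K')) (by positivity)
  obtain ⟨N, hN⟩ := hg'
  have hgN : ∀ j, N ≤ j → g j ≤ ε / (2 * K') := by
    intro j hj
    have := hN j hj
    rw [Real.dist_eq, sub_zero, abs_of_nonneg (hg0 j)] at this
    exact this.le
  -- head bound
  set S : ℝ := ∑ j ∈ Finset.range N, g j with hS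
  have hSnonneg : 0 ≤ S := Finset.sum_nonneg fun j _ => hg0 j
  set δ : ℝ := ε / (2 * (S + 1)) with hδ
  have hδpos : 0 < δ := by positivity
  have hcol' : ∀ j ∈ Finset.range N, ∀ᶠ n in atTop, ‖C n j‖ < δ := by
    intro j _
    have := (hcol j).norm
    rw [norm_zero] at this
    exact this.eventually_lt_const hδpos
  have hall : ∀ᶠ n in atTop, ∀ j ∈ Finset.range N, ‖C n j‖ < δ :=
    (Finset.range N).eventually_all.mpr hcol'
  rw [eventually_atTop] at hall
  obtain ⟨M, hM⟩ := hall
  refine ⟨max M N, fun n hn => ?_⟩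
  have hMn : M ≤ n := le_trans (le_max_left _ _) hn
  have hNn : N ≤ n := le_trans (le_max_right _ _) hn
  have hsplit : ∑ j ∈ Finset.range (n + 1), ‖C n j‖ * g j
      = (∑ j ∈ Finset.range N, ‖C n j‖ * g j)
        + ∑ j ∈ Finset.Ico N (n + 1), ‖C n j‖ * g j := by
    simp only [Finset.range_eq_Ico]
    exact (Finset.sum_Ico_consecutive _ (Nat.zero_le N) (by omega)).symm
  have hhead : ∑ j ∈ Finset.range N, ‖C n j‖ * g j < ε / 2 := by
    calc ∑ j ∈ Finset.range N, ‖C n j‖ * g j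
        ≤ ∑ j ∈ Finset.range N, δ * g j := by
          refine Finset.sum_le_sum fun j hj => ?_
          exact mul_le_mul_of_nonneg_right (hM n hMn j hj).le (hg0 j)
      _ = δ * S := by rw [← Finset.mul_sum]
      _ < δ * (S + 1) := by nlinarith
      _ = ε / 2 := by
          rw [hδ, div_mul_eq_mul_div, mul_div_mul_right _ _ (by positivity : (S + 1 : ℝ) ≠ 0)]
  have htail : ∑ j ∈ Finset.Ico N (n + 1), ‖C n j‖ * g j ≤ ε / 2 := by
    calc ∑ j ∈ Finset.Ico N (n + 1), ‖C n j‖ * g j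
        ≤ ∑ j ∈ Finset.Ico N (n + 1), ‖C n j‖ * (ε / (2 * K')) := by
          refine Finset.sum_le_sum fun j hj => ?_
          exact mul_le_mul_of_nonneg_left (hgN j (Finset.mem_Ico.mp hj).1) (norm_nonneg _)
      _ = (∑ j ∈ Finset.Ico N (n + 1), ‖C n j‖) * (ε / (2 * K')) := by
          rw [Finset.sum_mul]
      _ ≤ K' * (ε / (2 * K')) := by
          refine mul_le_mul_of_nonneg_right ?_ (by positivity)
          refine le_trans (le_trans ?_ (hK n)) hKK'
          rw [Mat.rowSum, Finset.range_eq_Ico]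
          exact Finset.sum_le_sum_of_subset_of_nonneg
            (Finset.Ico_subset_Ico (Nat.zero_le _) le_rfl)
            (fun i _ _ => norm_nonneg _)
      _ = ε / 2 := by field_simp
  rw [Real.dist_eq, sub_zero, abs_of_nonneg
    (Finset.sum_nonneg fun j _ => mul_nonneg (norm_nonneg _) (hg0 j)), hsplit]
  linarith

lemma seminorm_sum_le {E : Type*} [AddCommGroup E] [Module ℂ E] (p : Seminorm ℂ E)
    {ι : Type*} (s : Finset ι) (f : ι → E) : p (∑ i ∈ s, f i) ≤ ∑ i ∈ s, p (f i) := by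
  classical
  induction s using Finset.cons_induction with
  | empty => simp
  | cons a s ha ih =>
    rw [Finset.sum_cons, Finset.sum_cons]
    exact le_trans (map_add_le_add p _ _) (add_le_add le_rfl ih)

/-- If `(A, B)` satisfies (*2C), then every `A`-null sequence of continuous linear
operators on a locally convex Hausdorff space is `B`-null. -/
theorem statement1 (A B C : Mat) (hA : A.LowerTri) (hB : B.LowerTri) (hC : C.LowerTri)
    (hCA : Mat.mul C A = B) (hStar : C.Star2C) :
    ∀ (E : Type) [AddCommGroup E] [Module ℂ E] [UniformSpace E] [IsUniformAddGroup E]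
      [ContinuousSMul ℂ E] [LocallyConvexSpace ℝ E] [T2Space E],
      ∀ T : ℕ → E →L[ℂ] E, MatNull A T → MatNull B T := by
  intro E _ _ _ _ _ _ _ T hT x
  obtain ⟨⟨K, hK⟩, hcol⟩ := hStar
  haveI : ContinuousSMul ℝ E := IsScalarTower.continuousSMul ℂ
  -- the algebraic identity
  have key : ∀ n, matOp B T n x = ∑ j ∈ Finset.range (n + 1), C n j • matOp A T j x := by
    intro n
    have h1 : matOp B T n x = ∑ i ∈ Finset.range (n + 1), B n i • T i x := by
      simp [matOp]
    have h2 : ∀ j ∈ Finset.range (n + 1),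
        matOp A T j x = ∑ i ∈ Finset.range (n + 1), A j i • T i x := by
      intro j hj
      rw [Finset.mem_range] at hj
      have : matOp A T j x = ∑ i ∈ Finset.range (j + 1), A j i • T i x := by simp [matOp]
      rw [this]
      refine Finset.sum_subset (Finset.range_subset_range.mpr (by omega)) ?_
      intro i _ hi
      rw [Finset.mem_range, not_lt] at hi
      rw [hA j i (by omega), zero_smul]
    rw [h1]
    calc ∑ i ∈ Finset.range (n + 1), B n i • T i x
        = ∑ i ∈ Finset.range (n + 1),
            (∑ j ∈ Finset.range (n + 1), C n j * A j i) • T i x := by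
          refine Finset.sum_congr rfl fun i _ => ?_
          rw [← hCA]; rfl
      _ = ∑ i ∈ Finset.range (n + 1), ∑ j ∈ Finset.range (n + 1),
            C n j • (A j i • T i x) := by
          refine Finset.sum_congr rfl fun i _ => ?_
          rw [Finset.sum_smul]
          exact Finset.sum_congr rfl fun j _ => by rw [mul_smul]
      _ = ∑ j ∈ Finset.range (n + 1), ∑ i ∈ Finset.range (n + 1),
            C n j • (A j i • T i x) := Finset.sum_comm
      _ = ∑ j ∈ Finset.range (n + 1), C n j • matOp A T j x := by
          refine Finset.sum_congr rfl fun j hj => ?_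
          rw [h2 j hj, Finset.smul_sum]
  -- pass to seminorms
  haveI : LocallyConvexSpace ℂ E := by
    have hc : ∀ (r : ℝ) (y : E), (r : ℂ) • y = r • y := fun r y => by
      rw [← smul_one_smul ℂ r y, Complex.real_smul, mul_one]
    rw [locallyConvexSpace_iff_exists_convex_subset]
    intro x0 U hU
    obtain ⟨S, hS, hSc, hSU⟩ :=
      (locallyConvexSpace_iff_exists_convex_subset ℝ E).mp ‹_› x0 U hU
    refine ⟨S, hS, ?_, hSU⟩
    intro y hy z hz a b ha hb hab
    have ha' : a = (a.re : ℂ) :=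
      Complex.ext (by simp) (by simp [(Complex.nonneg_iff.mp ha).2.symm])
    have hb' : b = (b.re : ℂ) :=
      Complex.ext (by simp) (by simp [(Complex.nonneg_iff.mp hb).2.symm])
    have hre : a.re + b.re = 1 := by
      have := congrArg Complex.re hab
      simpa using this
    rw [ha', hb', hc, hc]
    exact hSc hy hz (Complex.nonneg_iff.mp ha).1 (Complex.nonneg_iff.mp hb).1 hre
  have hws : WithSeminorms (gaugeSeminormFamily ℂ E) := with_gaugeSeminormFamily
  rw [hws.tendsto_nhds]
  intro i ε hε
  set p := gaugeSeminormFamily ℂ E i with hp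
  have hy : Tendsto (fun j => p (matOp A T j x)) atTop (𝓝 0) := by
    have h0 := (hws.tendsto_nhds (fun j => matOp A T j x) 0).mp (hT x) i
    rw [Metric.tendsto_atTop]
    intro ε' hε'
    obtain ⟨N, hN⟩ := (h0 ε' hε').exists_forall_of_atTop
    refine ⟨N, fun n hn => ?_⟩
    have := hN n hn
    rw [sub_zero] at this
    rw [Real.dist_eq, sub_zero, abs_of_nonneg (apply_nonneg p _)]
    exact this
  have hbound : ∀ n, p (matOp B T n x - 0)
      ≤ ∑ j ∈ Finset.range (n + 1), ‖C n j‖ * p (matOp A T j x) := by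
    intro n
    rw [sub_zero, key n]
    refine le_trans (seminorm_sum_le p _ _) ?_
    refine Finset.sum_le_sum fun j _ => ?_
    rw [map_smul_eq_mul]
  have := squeeze_zero (f := fun n => p (matOp B T n x - 0)) (fun n => apply_nonneg p _) hbound
    (aux_real C K hK hcol _ (fun j => apply_nonneg p _) hy)
  exact this.eventually_lt_const hε
end
end

section
/- Let A, B, C be lower triangular infinite complex matrices with CA = B. Then the pair (A,B) satisfies property (*3C) if and only if the matrix C induces a compact linear operator from ℓ∞ into c₀, i.e. Cx ∈ c₀ for every x ∈ ℓ∞ and the linear map C : ℓ∞ → c₀ is a compact operator. -/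
open Filter Finset Topology ZeroAtInfty
open scoped ENNReal ComplexOrder

noncomputable section

/-! ### Auxiliary lemmas -/

lemma czero_norm_apply_le' (f : czero) (n : ℕ) : ‖f n‖ ≤ ‖f‖ := by
  rw [← ZeroAtInftyContinuousMap.norm_toBCF_eq_norm]
  exact f.toBCF.norm_coe_le_norm n

lemma czero_norm_le' (f : czero) {M : ℝ} (hM : 0 ≤ M) (h : ∀ n, ‖f n‖ ≤ M) : ‖f‖ ≤ M := by
  rw [← ZeroAtInftyContinuousMap.norm_toBCF_eq_norm]
  exact (BoundedContinuousFunction.norm_le hM).2 h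

lemma czero_tendsto' (f : czero) : Tendsto (fun n => f n) atTop (𝓝 (0 : ℂ)) := by
  have h := zero_at_infty f
  rwa [cocompact_eq_atTop] at h

def mkC0 (f : ℕ → ℂ) (hf : Tendsto f atTop (𝓝 0)) : czero :=
  ⟨⟨f, continuous_of_discreteTopology⟩, by rwa [cocompact_eq_atTop]⟩

@[simp] lemma mkC0_apply (f : ℕ → ℂ) (hf : Tendsto f atTop (𝓝 0)) (n : ℕ) :
    mkC0 f hf n = f n := rfl

lemma compact_box {a : ℕ → ℝ} (ha : Tendsto a atTop (𝓝 0)) :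
    ∃ K : Set czero, IsCompact K ∧ ∀ f : czero, (∀ n, ‖f n‖ ≤ a n) → f ∈ K := by
  set S : Set (ℕ → ℂ) := Set.univ.pi fun n => Metric.closedBall (0 : ℂ) (a n) with hSdef
  have hS : IsCompact S := isCompact_univ_pi fun n => isCompact_closedBall _ _
  have memS : ∀ f : S, ∀ n, ‖(f : ℕ → ℂ) n‖ ≤ a n := by
    intro f n
    have := f.2 n (Set.mem_univ n)
    simpa [Metric.mem_closedBall, dist_eq_norm] using this
  have htend : ∀ f : S, Tendsto (fun n => (f : ℕ → ℂ) n) atTop (𝓝 0) :=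
    fun f => squeeze_zero_norm (memS f) ha
  set ι : S → czero := fun f => mkC0 _ (htend f) with hι
  have hcont : Continuous ι := by
    rw [continuous_iff_continuousAt]
    intro f₀
    rw [ContinuousAt, Metric.tendsto_nhds]
    intro ε hε
    obtain ⟨N, hN⟩ := (Metric.tendsto_atTop.1 ha) (ε / 4) (by linarith)
    have hev : ∀ᶠ g : S in 𝓝 f₀,
        ∀ n ∈ Finset.range N, ‖(g : ℕ → ℂ) n - (f₀ : ℕ → ℂ) n‖ < ε / 2 := by
      rw [eventually_all_finset]
      intro n _
      have hc : Continuous fun g : S => (g : ℕ → ℂ) n :=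
        (continuous_apply n).comp continuous_subtype_val
      have := hc.continuousAt (x := f₀)
      rw [ContinuousAt, Metric.tendsto_nhds] at this
      filter_upwards [this (ε / 2) (by linarith)] with g hg
      rwa [dist_eq_norm] at hg
    filter_upwards [hev] with g hg
    rw [dist_eq_norm]
    have hb : ∀ n, ‖(ι g - ι f₀) n‖ ≤ ε / 2 := by
      intro n
      have happ : (ι g - ι f₀) n = (g : ℕ → ℂ) n - (f₀ : ℕ → ℂ) n := rfl
      rw [happ]
      by_cases hn : n < N
      · exact (hg n (Finset.mem_range.2 hn)).le
      · have h1 := memS g n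
        have h2 := memS f₀ n
        have h3 : a n < ε / 4 := by
          have := hN n (le_of_not_gt hn)
          rw [Real.dist_eq, sub_zero] at this
          exact lt_of_le_of_lt (le_abs_self _) this
        calc ‖(g : ℕ → ℂ) n - (f₀ : ℕ → ℂ) n‖ ≤ ‖(g : ℕ → ℂ) n‖ + ‖(f₀ : ℕ → ℂ) n‖ :=
              norm_sub_le _ _
          _ ≤ ε / 2 := by linarith
    have := czero_norm_le' _ (by linarith) hb
    linarith
  have : CompactSpace S := isCompact_iff_compactSpace.1 hS
  refine ⟨Set.range ι, isCompact_range hcont, ?_⟩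
  intro f hf
  have hfS : (⇑f : ℕ → ℂ) ∈ S := by
    intro n _
    simpa [Metric.mem_closedBall, dist_eq_norm] using hf n
  refine ⟨⟨⇑f, hfS⟩, ?_⟩
  apply ZeroAtInftyContinuousMap.ext
  intro n
  rfl

lemma compact_equivanish {K : Set czero} (hK : IsCompact K) {δ : ℝ} (hδ : 0 < δ) :
    ∃ N, ∀ f ∈ K, ∀ n ≥ N, ‖f n‖ < δ := by
  obtain ⟨t, hts, htfin, hcov⟩ := hK.finite_cover_balls (half_pos hδ)
  have hev : ∀ᶠ n in atTop, ∀ g ∈ t, ‖(g : czero) n‖ < δ / 2 := by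
    rw [eventually_all_finite htfin]
    intro g _
    exact (NormedAddCommGroup.tendsto_nhds_zero.1 (czero_tendsto' g)) (δ / 2) (half_pos hδ)
  obtain ⟨N, hN⟩ := eventually_atTop.1 hev
  refine ⟨N, fun f hf n hn => ?_⟩
  obtain ⟨g, hg, hfg⟩ := Set.mem_iUnion₂.1 (hcov hf)
  have h1 : ‖f n - g n‖ ≤ ‖f - g‖ := czero_norm_apply_le' (f - g) n
  have h2 : ‖f - g‖ < δ / 2 := by rwa [Metric.mem_ball, dist_eq_norm] at hfg
  have h3 : ‖(g : czero) n‖ < δ / 2 := hN n hn g hg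
  calc ‖f n‖ = ‖(f n - g n) + g n‖ := by ring_nf
    _ ≤ ‖f n - g n‖ + ‖g n‖ := norm_add_le _ _
    _ < δ := by linarith

lemma mul_signTerm (z : ℂ) (r : ℝ) :
    z * (if z = 0 then 0 else (r : ℂ) * (starRingEnd ℂ) z / (‖z‖ : ℂ)) = ((r * ‖z‖ : ℝ) : ℂ) := by
  split_ifs with h
  · simp [h]
  · have hz : (‖z‖ : ℂ) ≠ 0 := by
      simpa using norm_ne_zero_iff.2 h
    field_simp
    rw [show z * (r : ℂ) * (starRingEnd ℂ) z = (r : ℂ) * (z * (starRingEnd ℂ) z) by ring,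
      Complex.mul_conj, Complex.normSq_eq_norm_sq]
    push_cast
    ring

lemma norm_signTerm (z : ℂ) {r : ℝ} (hr : 0 ≤ r) :
    ‖(if z = 0 then 0 else (r : ℂ) * (starRingEnd ℂ) z / (‖z‖ : ℂ))‖ ≤ r := by
  split_ifs with h
  · simpa using hr
  · have hz : ‖z‖ ≠ 0 := norm_ne_zero_iff.2 h
    rw [norm_div, norm_mul, RCLike.norm_conj, Complex.norm_real, Complex.norm_real,
      Real.norm_of_nonneg hr, Real.norm_of_nonneg (norm_nonneg z)]
    rw [mul_div_assoc, div_self hz, mul_one]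

lemma matRowSum_nonneg (C : Mat) (n : ℕ) : 0 ≤ C.rowSum n :=
  Finset.sum_nonneg fun _ _ => norm_nonneg _

lemma matApply_norm_le (C : Mat) (x : ℕ → ℂ) {M : ℝ} (hx : ∀ i, ‖x i‖ ≤ M) (n : ℕ) :
    ‖C.apply x n‖ ≤ C.rowSum n * M := by
  rw [Mat.apply, Mat.rowSum, Finset.sum_mul]
  refine (norm_sum_le _ _).trans (Finset.sum_le_sum fun i _ => ?_)
  rw [norm_mul]
  exact mul_le_mul_of_nonneg_left (hx i) (norm_nonneg _)

/-- The pair `(A, B)` satisfies (*3C) iff `C` induces a compact linear operator from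
`ℓ∞` into `c₀`: `Cx ∈ c₀` for every `x ∈ ℓ∞`, and the induced map `ℓ∞ → c₀` is a
compact operator. -/
theorem statement5 (A B C : Mat) (hA : A.LowerTri) (hB : B.LowerTri) (hC : C.LowerTri)
    (hCA : Mat.mul C A = B) :
    C.Star3C ↔
      ((∀ x : ℕ → ℂ, Memℓp x ∞ → Tendsto (C.apply x) atTop (𝓝 (0 : ℂ))) ∧
        ∃ Φ : ellInf → czero, (∀ (x : ellInf) (n : ℕ), Φ x n = C.apply (⇑x) n) ∧
          IsCompactOperator Φ) := by
  constructor
  · intro h3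
    have part1 : ∀ x : ℕ → ℂ, Memℓp x ∞ → Tendsto (C.apply x) atTop (𝓝 (0 : ℂ)) := by
      intro x hx
      obtain ⟨M, hM⟩ := memℓp_infty_iff.1 hx
      have hxM : ∀ i, ‖x i‖ ≤ M := fun i => hM ⟨i, rfl⟩
      refine squeeze_zero_norm (fun n => matApply_norm_le C x hxM n) ?_
      simpa using h3.mul_const M
    refine ⟨part1, ?_⟩
    refine ⟨fun x => mkC0 (C.apply ⇑x) (part1 ⇑x (lp.memℓp x)), fun x n => rfl, ?_⟩
    obtain ⟨K, hKc, hKmem⟩ := compact_box h3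
    refine ⟨K, hKc, ?_⟩
    refine Filter.mem_of_superset (Metric.closedBall_mem_nhds (0 : ellInf) one_pos) ?_
    intro x hx
    have hx1 : ‖x‖ ≤ 1 := by rwa [Metric.mem_closedBall, dist_zero_right] at hx
    refine hKmem _ fun n => ?_
    have hxb : ∀ i, ‖(⇑x : ℕ → ℂ) i‖ ≤ 1 := fun i =>
      (lp.norm_apply_le_norm ENNReal.top_ne_zero x i).trans hx1
    have := matApply_norm_le C (⇑x) hxb n
    simpa using this
  · rintro ⟨h1, Φ, hΦ, hcomp⟩
    obtain ⟨K, hKc, hKnhds⟩ := hcomp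
    obtain ⟨ε, hε, hball⟩ := Metric.mem_nhds_iff.1 hKnhds
    set r := ε / 2 with hr
    have hr0 : 0 < r := half_pos hε
    rw [Mat.Star3C, Metric.tendsto_atTop]
    intro δ hδ
    obtain ⟨N, hN⟩ := compact_equivanish hKc (mul_pos hr0 hδ)
    refine ⟨N, fun n hn => ?_⟩
    set y : ℕ → ℂ :=
      fun i => if C n i = 0 then 0 else (r : ℂ) * (starRingEnd ℂ) (C n i) / (‖C n i‖ : ℂ) with hy
    have hynorm : ∀ i, ‖y i‖ ≤ r := fun i => norm_signTerm (C n i) hr0.le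
    have hym : Memℓp y ∞ := memℓp_infty_iff.2 ⟨r, by rintro v ⟨i, rfl⟩; exact hynorm i⟩
    set x : ellInf := ⟨y, hym⟩ with hx
    have hcoe : (⇑x : ℕ → ℂ) = y := rfl
    have hxn : ‖x‖ ≤ r := lp.norm_le_of_forall_le hr0.le hynorm
    have hxball : x ∈ Metric.ball (0 : ellInf) ε := by
      rw [Metric.mem_ball, dist_zero_right]
      exact lt_of_le_of_lt hxn (by rw [hr]; linarith)
    have hmem : Φ x ∈ K := hball hxball
    have hval : Φ x n = ((r * C.rowSum n : ℝ) : ℂ) := by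
      rw [hΦ x n, hcoe, Mat.apply]
      have hterm : ∀ i ∈ Finset.range (n + 1), C n i * y i = ((r * ‖C n i‖ : ℝ) : ℂ) :=
        fun i _ => mul_signTerm (C n i) r
      rw [Finset.sum_congr rfl hterm, Mat.rowSum]
      push_cast
      rw [Finset.mul_sum]
    have hlt := hN (Φ x) hmem n hn
    rw [hval, Complex.norm_real,
      Real.norm_of_nonneg (mul_nonneg hr0.le (matRowSum_nonneg C n))] at hlt
    have hfin : C.rowSum n < δ := lt_of_mul_lt_mul_left hlt hr0.le
    rwa [Real.dist_eq, sub_zero, abs_of_nonneg (matRowSum_nonneg C n)]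
end
end

section
/- Let A and B be lower triangular infinite complex matrices with A invertible (i.e. a_{nn} ≠ 0 for all n), and let A^{-1} be its lower triangular inverse. Then the following are equivalent: (i) the pair (A,B) satisfies (*3C) (with C = B A^{-1}); (ii) for every locally convex Hausdorff topological vector space E over ℂ, every A-bounded sequence of continuous linear operators on E is B-null; (iii) every A-bounded sequence of continuous linear operators on ℓ∞ is B-null; (iv) the sequence 𝒮 = ((A^{-1}S)_n)_{n∈ℕ} of operators on ℓ∞, where (A^{-1}S)_n = Σ_{i=0}^{n} (A^{-1})_{ni} S^i and S is the backward shift, is B-null. -/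
open Filter Finset Topology ZeroAtInfty
open scoped ENNReal ComplexOrder

noncomputable section

set_option synthInstance.maxHeartbeats 1000000
set_option maxHeartbeats 1000000

section Lemmas

lemma Mat.mul_lowerTri (C D : Mat) (hD : D.LowerTri) : (Mat.mul C D).LowerTri := by
  intro n k hnk
  apply Finset.sum_eq_zero
  intro j hj
  rw [hD j k (lt_of_le_of_lt (Nat.lt_succ_iff.mp (Finset.mem_range.mp hj)) hnk), mul_zero]

lemma Mat.mul_one' (B : Mat) (hB : B.LowerTri) : Mat.mul B Mat.one = B := by
  funext n k
  unfold Mat.mul Mat.one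
  by_cases hk : k ≤ n
  · rw [Finset.sum_eq_single k]
    · simp
    · intro j _ hjk; simp [hjk]
    · intro h; exact absurd (Finset.mem_range.mpr (Nat.lt_succ_of_le hk)) h
  · rw [hB n k (not_le.mp hk)]
    apply Finset.sum_eq_zero
    intro j hj
    have : ¬ j = k := by
      intro h; exact hk (h ▸ Nat.lt_succ_iff.mp (Finset.mem_range.mp hj))
    simp [this]

lemma Mat.mul_assoc' (B Ainv A : Mat) (hAinv : Ainv.LowerTri) :
    Mat.mul (Mat.mul B Ainv) A = Mat.mul B (Mat.mul Ainv A) := by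
  funext n k
  unfold Mat.mul
  simp_rw [Finset.sum_mul, Finset.mul_sum]
  rw [Finset.sum_comm]
  apply Finset.sum_congr rfl
  intro l hl
  rw [Finset.mem_range, Nat.lt_succ_iff] at hl
  rw [← Finset.sum_subset (Finset.range_subset_range.mpr (by omega : l + 1 ≤ n + 1))]
  · apply Finset.sum_congr rfl; intro j _; ring
  · intro j _ hj
    rw [Finset.mem_range, Nat.lt_succ_iff, not_le] at hj
    rw [hAinv l j hj, mul_zero, zero_mul]

end Lemmas
section OpLemmas

variable {E : Type*} [AddCommGroup E] [Module ℂ E] [UniformSpace E]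
  [IsUniformAddGroup E] [ContinuousSMul ℂ E]

lemma matOp_mul_s8 (C D : Mat) (hD : D.LowerTri) (T : ℕ → E →L[ℂ] E) (n : ℕ) :
    matOp (Mat.mul C D) T n = ∑ k ∈ Finset.range (n + 1), C n k • matOp D T k := by
  unfold matOp Mat.mul
  simp_rw [Finset.sum_smul, Finset.smul_sum]
  rw [Finset.sum_comm]
  apply Finset.sum_congr rfl
  intro k hk
  rw [Finset.mem_range, Nat.lt_succ_iff] at hk
  rw [← Finset.sum_subset (Finset.range_subset_range.mpr (by omega : k + 1 ≤ n + 1))]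
  · apply Finset.sum_congr rfl; intro i _; rw [mul_smul]
  · intro i _ hi
    rw [Finset.mem_range, Nat.lt_succ_iff, not_le] at hi
    rw [hD k i hi, mul_zero, zero_smul]

lemma matOp_one (T : ℕ → E →L[ℂ] E) (n : ℕ) : matOp Mat.one T n = T n := by
  unfold matOp Mat.one
  rw [Finset.sum_eq_single n]
  · simp
  · intro j _ hjn; simp [Ne.symm hjn]
  · intro h; exact absurd (Finset.mem_range.mpr (Nat.lt_succ_self n)) h

end OpLemmas
section Convexity

variable {E : Type*} [AddCommGroup E] [Module ℂ E]

lemma sum_smul_mem_absConvex {V : Set E} (hbal : Balanced ℂ V) (hconv : Convex ℝ V)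
    (h0 : (0 : E) ∈ V) (a : ℕ → ℂ) (z : ℕ → E) (s : Finset ℕ)
    (hz : ∀ j ∈ s, z j ∈ V) (ha : ∑ j ∈ s, ‖a j‖ ≤ 1) :
    (∑ j ∈ s, a j • z j) ∈ V := by
  set r : ℝ := ∑ j ∈ s, ‖a j‖ with hr
  have hr0 : 0 ≤ r := Finset.sum_nonneg fun j _ => norm_nonneg _
  rcases eq_or_lt_of_le hr0 with hre | hrpos
  · have : ∀ j ∈ s, a j = 0 := by
      intro j hj
      have := (Finset.sum_eq_zero_iff_of_nonneg (fun j _ => norm_nonneg (a j))).mp hre.symm j hj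
      exact norm_eq_zero.mp this
    rw [Finset.sum_eq_zero fun j hj => by rw [this j hj, zero_smul]]
    exact h0
  · set u : ℕ → E := fun j => if a j = 0 then 0 else ((‖a j‖ : ℂ)⁻¹ * a j) • z j with hu
    have hukey : ∀ j ∈ s, a j • z j = ‖a j‖ • u j := by
      intro j hj
      by_cases h : a j = 0
      · simp [hu, h]
      · rw [hu]
        simp only [h, if_neg, if_false]
        rw [← smul_assoc]
        congr 1
        have hn : (‖a j‖ : ℂ) ≠ 0 := by
          simpa using h
        rw [Complex.real_smul, ← mul_assoc, mul_inv_cancel₀ hn, one_mul]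
    have huV : ∀ j ∈ s, u j ∈ V := by
      intro j hj
      by_cases h : a j = 0
      · simpa [hu, h] using h0
      · have hn : ‖(‖a j‖ : ℂ)⁻¹ * a j‖ ≤ 1 := by
          rw [norm_mul, norm_inv, Complex.norm_real, Real.norm_eq_abs,
            abs_of_nonneg (norm_nonneg _), inv_mul_cancel₀ (norm_ne_zero_iff.mpr h)]
        simpa [hu, if_neg h] using hbal.smul_mem hn (hz j hj)
    have hv : (∑ j ∈ s, (r⁻¹ * ‖a j‖) • u j) ∈ V := by
      apply hconv.sum_mem
      · intro j hj; positivity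
      · rw [← Finset.mul_sum, inv_mul_cancel₀ (ne_of_gt hrpos)]
      · exact huV
    have : ∑ j ∈ s, a j • z j = r • ∑ j ∈ s, (r⁻¹ * ‖a j‖) • u j := by
      rw [Finset.smul_sum]
      apply Finset.sum_congr rfl
      intro j hj
      rw [hukey j hj, smul_smul, ← mul_assoc, mul_inv_cancel₀ (ne_of_gt hrpos), one_mul]
    rw [this]
    have hr1 : r ≤ 1 := ha
    have := hconv hv h0 hr0 (by linarith : (0:ℝ) ≤ 1 - r) (by ring)
    simpa using this

end Convexity
open scoped Uniformity
section Star3Null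

variable {E : Type*} [AddCommGroup E] [Module ℂ E] [UniformSpace E]
  [IsUniformAddGroup E] [ContinuousSMul ℂ E] [LocallyConvexSpace ℝ E]

lemma star3C_null (C : Mat) (hC3 : C.Star3C) (F : ℕ → E →L[ℂ] E)
    (hF : Equicontinuous fun j => ⇑(F j)) (x : E) :
    Tendsto (fun n => ∑ j ∈ Finset.range (n + 1), C n j • F j x) atTop (𝓝 (0 : E)) := by
  haveI : LocallyConvexSpace ℂ E := (locallyConvexSpace_iff_zero ℂ E).mpr
    ((LocallyConvexSpace.convex_basis_zero ℝ E).to_hasBasis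
      (fun s hs => ⟨s, ⟨hs.1, convex_RCLike_iff_convex_real.mpr hs.2⟩, subset_rfl⟩)
      (fun s hs => ⟨s, ⟨hs.1, convex_RCLike_iff_convex_real.mp hs.2⟩, subset_rfl⟩))
  rw [(nhds_hasBasis_absConvex ℂ E).tendsto_right_iff]
  rintro V ⟨hV, hbal, hconv⟩
  replace hconv := convex_RCLike_iff_convex_real.mp hconv
  have h0V : (0 : E) ∈ V := mem_of_mem_nhds hV
  -- equicontinuity at 0 gives a neighborhood U with F j '' U ⊆ V
  have hent : {p : E × E | p.2 - p.1 ∈ V} ∈ 𝓤 E := by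
    rw [uniformity_eq_comap_nhds_zero E]
    exact Filter.preimage_mem_comap hV
  have hU0 : ∀ᶠ u in 𝓝 (0 : E), ∀ j, F j u ∈ V := by
    have := hF 0 _ hent
    filter_upwards [this] with u hu j
    simpa using hu j
  obtain ⟨U, hUmem, hUsub⟩ := Filter.eventually_iff_exists_mem.mp hU0
  -- absorb x
  have habs : Absorbent ℂ U := absorbent_nhds_zero hUmem
  obtain ⟨c, hcx, hc0⟩ := ((habs x).and (Bornology.eventually_ne_cobounded 0)).exists
  obtain ⟨u₀, hu₀U, hu₀x⟩ := hcx (Set.mem_singleton x)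
  have hFx : ∀ j, F j x = c • F j u₀ := by
    intro j
    rw [← hu₀x, map_smul]
  have hcpos : 0 < ‖c‖ := norm_pos_iff.mpr hc0
  -- eventually the row sums are small
  have hsmall : ∀ᶠ n in atTop, Mat.rowSum C n ≤ ‖c‖⁻¹ := by
    have := hC3.eventually_le_const (by positivity : (0:ℝ) < ‖c‖⁻¹)
    filter_upwards [this] with n hn using hn
  filter_upwards [hsmall] with n hn
  have : ∑ j ∈ Finset.range (n + 1), C n j • F j x
      = ∑ j ∈ Finset.range (n + 1), (C n j * c) • F j u₀ := by
    apply Finset.sum_congr rfl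
    intro j _
    rw [hFx j, smul_smul]
  rw [this]
  apply sum_smul_mem_absConvex hbal hconv h0V
  · intro j _
    exact hUsub u₀ hu₀U j
  · calc ∑ j ∈ Finset.range (n + 1), ‖C n j * c‖
        = (∑ j ∈ Finset.range (n + 1), ‖C n j‖) * ‖c‖ := by
          rw [Finset.sum_mul]; exact Finset.sum_congr rfl fun j _ => norm_mul _ _
      _ ≤ ‖c‖⁻¹ * ‖c‖ := by
          apply mul_le_mul_of_nonneg_right hn (norm_nonneg c)
      _ = 1 := inv_mul_cancel₀ (ne_of_gt hcpos)

end Star3Null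
section Shift

/-- The backward shift as a continuous linear map on `ℓ∞`. -/
def shiftOp : ellInf →L[ℂ] ellInf := by
  refine LinearMap.mkContinuous
    { toFun := fun x => ⟨fun k => x (k + 1), ?_⟩
      map_add' := ?_
      map_smul' := ?_ } 1 ?_
  · apply memℓp_infty
    refine ⟨‖x‖, ?_⟩
    rintro r ⟨k, rfl⟩
    exact lp.norm_apply_le_norm ENNReal.top_ne_zero x (k + 1)
  · intro x y
    apply Subtype.ext
    funext k
    simp only [lp.coeFn_add, Pi.add_apply]
  · intro c x
    apply Subtype.ext
    funext k
    simp only [lp.coeFn_smul, Pi.smul_apply]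
    rfl
  · intro x
    rw [one_mul]
    apply lp.norm_le_of_forall_le (norm_nonneg x)
    intro k
    exact lp.norm_apply_le_norm ENNReal.top_ne_zero x (k + 1)

lemma shiftOp_apply (x : ellInf) (k : ℕ) : shiftOp x k = x (k + 1) := rfl

end Shift
section EllInfFacts

lemma pow_shift_apply (Sop : ellInf →L[ℂ] ellInf)
    (hS : ∀ (x : ellInf) (k : ℕ), Sop x k = x (k + 1)) (i : ℕ) (x : ellInf) (k : ℕ) :
    (Sop ^ i) x k = x (k + i) := by
  induction i generalizing x k with
  | zero => simp [ContinuousLinearMap.one_apply]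
  | succ m ih =>
    rw [pow_succ, ContinuousLinearMap.mul_apply, ih (Sop x) k, hS x (k + m)]
    congr 1

lemma shift_pow_norm_le (Sop : ellInf →L[ℂ] ellInf)
    (hS : ∀ (x : ellInf) (k : ℕ), Sop x k = x (k + 1)) (i : ℕ) : ‖Sop ^ i‖ ≤ 1 := by
  have h1 : ‖Sop‖ ≤ 1 := by
    apply ContinuousLinearMap.opNorm_le_bound _ zero_le_one
    intro x
    rw [one_mul]
    apply lp.norm_le_of_forall_le (norm_nonneg x)
    intro k
    rw [hS x k]
    exact lp.norm_apply_le_norm ENNReal.top_ne_zero x (k + 1)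
  induction i with
  | zero => rw [pow_zero]; exact ContinuousLinearMap.norm_id_le
  | succ m ih =>
    rw [pow_succ]
    calc ‖Sop ^ m * Sop‖ ≤ ‖Sop ^ m‖ * ‖Sop‖ := norm_mul_le _ _
      _ ≤ 1 * 1 := mul_le_mul ih h1 (norm_nonneg _) zero_le_one
      _ = 1 := one_mul 1

/-- Evaluation of `matOp C (Sop ^ ·) n x` at coordinate `0`. -/
lemma matOp_pow_coord_zero (C : Mat) (Sop : ellInf →L[ℂ] ellInf)
    (hS : ∀ (x : ellInf) (k : ℕ), Sop x k = x (k + 1)) (n : ℕ) (x : ellInf) :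
    (matOp C (fun i => Sop ^ i) n x : ℕ → ℂ) 0
      = ∑ i ∈ Finset.range (n + 1), C n i * x i := by
  unfold matOp
  rw [ContinuousLinearMap.sum_apply]
  rw [lp.coeFn_sum, Finset.sum_apply]
  apply Finset.sum_congr rfl
  intro i _
  rw [ContinuousLinearMap.smul_apply, lp.coeFn_smul, Pi.smul_apply,
    pow_shift_apply Sop hS i x 0, zero_add, smul_eq_mul]

end EllInfFacts
section Schur

lemma schur_lemma (C : Mat)
    (h : ∀ x : ℕ → ℂ, (∀ i, ‖x i‖ ≤ 1) →
      Tendsto (fun n => ∑ i ∈ Finset.range (n + 1), C n i * x i) atTop (𝓝 (0 : ℂ))) :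
    Tendsto (fun n => ∑ i ∈ Finset.range (n + 1), ‖C n i‖) atTop (𝓝 (0 : ℝ)) := by
  set r : ℕ → ℝ := fun n => ∑ i ∈ Finset.range (n + 1), ‖C n i‖ with hrdef
  have hrnn : ∀ n, 0 ≤ r n := fun n => Finset.sum_nonneg fun i _ => norm_nonneg _
  by_contra hcon
  rw [Metric.tendsto_atTop] at hcon
  push_neg at hcon
  obtain ⟨ε, hε, hfreq⟩ := hcon
  have hfreq' : ∀ N, ∃ n, N ≤ n ∧ ε ≤ r n := by
    intro N
    obtain ⟨n, hn1, hn2⟩ := hfreq N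
    rw [Real.dist_eq, sub_zero, abs_of_nonneg (hrnn n)] at hn2
    exact ⟨n, hn1, hn2⟩
  -- columns tend to zero
  have hcol : ∀ i, Tendsto (fun n => C n i) atTop (𝓝 (0 : ℂ)) := by
    intro i
    have hx : ∀ j, ‖(fun j => if j = i then (1:ℂ) else 0) j‖ ≤ 1 := by
      intro j; by_cases hj : j = i <;> simp [hj]
    apply Tendsto.congr' _ (h _ hx)
    filter_upwards [eventually_ge_atTop i] with n hn
    rw [Finset.sum_eq_single i]
    · simp
    · intro j _ hj; simp [hj]
    · intro hni; exact absurd (Finset.mem_range.mpr (by omega)) hni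
  have hcolsum : ∀ p : ℕ,
      Tendsto (fun n => ∑ i ∈ Finset.range (p + 1), ‖C n i‖) atTop (𝓝 (0 : ℝ)) := by
    intro p
    have : Tendsto (fun n => ∑ i ∈ Finset.range (p + 1), ‖C n i‖) atTop
        (𝓝 (∑ _i ∈ Finset.range (p + 1), (0:ℝ))) :=
      tendsto_finset_sum _ fun i _ => by simpa using (hcol i).norm
    simpa using this
  -- recursive construction
  have step : ∀ p : ℕ, ∃ m, p < m ∧ ε ≤ r m ∧
      (∑ i ∈ Finset.range (p + 1), ‖C m i‖) ≤ ε / 4 := by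
    intro p
    obtain ⟨N, hN⟩ := Metric.tendsto_atTop.mp (hcolsum p) (ε / 4) (by linarith)
    obtain ⟨m, hm, hrm⟩ := hfreq' (max N (p + 1))
    refine ⟨m, ?_, hrm, ?_⟩
    · have := le_max_right N (p + 1); omega
    · have := hN m (le_trans (le_max_left N (p + 1)) hm)
      rw [Real.dist_eq, sub_zero,
        abs_of_nonneg (Finset.sum_nonneg fun i _ => norm_nonneg _)] at this
      linarith
  choose f hf1 hf2 hf3 using step
  set g : ℕ → ℕ := fun k => Nat.rec (f 0) (fun _ ih => f ih) k with hg
  have hgs : ∀ k, g (k + 1) = f (g k) := fun k => rfl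
  have hgmono : StrictMono g :=
    strictMono_nat_of_lt_succ fun k => by rw [hgs]; exact hf1 (g k)
  have hgr : ∀ k, ε ≤ r (g k) := by
    intro k
    cases k with
    | zero => exact hf2 0
    | succ m => rw [hgs]; exact hf2 (g m)
  have hgcol : ∀ k, (∑ i ∈ Finset.range (g k + 1), ‖C (g (k + 1)) i‖) ≤ ε / 4 :=
    fun k => by rw [hgs]; exact hf3 (g k)
  -- the sign sequence
  have hex : ∀ i : ℕ, ∃ k, i ≤ g k := fun i => ⟨i, hgmono.le_apply⟩
  set ρ : ℕ → ℕ := fun i => g (Nat.find (hex i)) with hρ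
  set x : ℕ → ℂ := fun i => if C (ρ i) i = 0 then 0 else (‖C (ρ i) i‖ : ℂ) / C (ρ i) i with hx
  have hxnorm : ∀ i, ‖x i‖ ≤ 1 := by
    intro i
    by_cases hc : C (ρ i) i = 0
    · simp [hx, hc]
    · rw [hx]
      simp only [hc, if_neg, if_false]
      rw [norm_div, Complex.norm_real, Real.norm_eq_abs, abs_of_nonneg (norm_nonneg _),
        div_self (norm_ne_zero_iff.mpr hc)]
  have hρblock : ∀ k i, g k < i → i ≤ g (k + 1) → ρ i = g (k + 1) := by
    intro k i h1 h2
    have hfind : Nat.find (hex i) = k + 1 := by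
      rw [Nat.find_eq_iff]
      refine ⟨h2, ?_⟩
      intro j hj hij
      have : g j ≤ g k := hgmono.monotone (by omega)
      omega
    rw [hρ]
    simp only
    rw [hfind]
  have hkey : ∀ k i, g k < i → i ≤ g (k + 1) →
      C (g (k + 1)) i * x i = ((‖C (g (k + 1)) i‖ : ℝ) : ℂ) := by
    intro k i h1 h2
    have hρi := hρblock k i h1 h2
    rw [hx]
    simp only
    rw [hρi]
    by_cases hc : C (g (k + 1)) i = 0
    · simp [hc]
    · rw [if_neg hc, mul_comm, div_mul_cancel₀ _ hc]
  -- the lower bound along the subsequence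
  have hlow : ∀ k, ε / 2 ≤ ‖∑ i ∈ Finset.range (g (k + 1) + 1), C (g (k + 1)) i * x i‖ := by
    intro k
    set m := g (k + 1) with hm
    set p := g k with hp
    have hpm : p + 1 ≤ m + 1 := by
      have := hgmono (show k < k + 1 by omega); omega
    have hsum : (∑ i ∈ Finset.range (p + 1), C m i * x i)
        + (∑ i ∈ Finset.Ico (p + 1) (m + 1), C m i * x i)
        = ∑ i ∈ Finset.range (m + 1), C m i * x i :=
      Finset.sum_range_add_sum_Ico _ hpm
    have hico : (∑ i ∈ Finset.Ico (p + 1) (m + 1), C m i * x i)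
        = ((∑ i ∈ Finset.Ico (p + 1) (m + 1), ‖C m i‖ : ℝ) : ℂ) := by
      rw [Complex.ofReal_sum]
      apply Finset.sum_congr rfl
      intro i hi
      rw [Finset.mem_Ico] at hi
      exact hkey k i (by omega) (by omega)
    have hico_val : (∑ i ∈ Finset.Ico (p + 1) (m + 1), ‖C m i‖)
        = r m - ∑ i ∈ Finset.range (p + 1), ‖C m i‖ := by
      have := Finset.sum_range_add_sum_Ico (fun i => ‖C m i‖) hpm
      simp only [hrdef] at this ⊢
      linarith
    have hhead : ‖∑ i ∈ Finset.range (p + 1), C m i * x i‖ ≤ ε / 4 := by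
      calc ‖∑ i ∈ Finset.range (p + 1), C m i * x i‖
          ≤ ∑ i ∈ Finset.range (p + 1), ‖C m i * x i‖ := norm_sum_le _ _
        _ ≤ ∑ i ∈ Finset.range (p + 1), ‖C m i‖ := by
            apply Finset.sum_le_sum
            intro i _
            rw [norm_mul]
            calc ‖C m i‖ * ‖x i‖ ≤ ‖C m i‖ * 1 :=
              mul_le_mul_of_nonneg_left (hxnorm i) (norm_nonneg _)
              _ = ‖C m i‖ := mul_one _
        _ ≤ ε / 4 := hgcol k
    have hicoge : ε - ε / 4 ≤ ∑ i ∈ Finset.Ico (p + 1) (m + 1), ‖C m i‖ := by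
      rw [hico_val]
      have h1 := hgcol k
      have h2 := hgr (k + 1)
      rw [← hm] at h2
      rw [← hp, ← hm] at h1
      linarith
    have hnico : ‖(∑ i ∈ Finset.Ico (p + 1) (m + 1), C m i * x i)‖
        = ∑ i ∈ Finset.Ico (p + 1) (m + 1), ‖C m i‖ := by
      rw [hico, Complex.norm_real, Real.norm_eq_abs,
        abs_of_nonneg (Finset.sum_nonneg fun i _ => norm_nonneg _)]
    set a := ∑ i ∈ Finset.range (p + 1), C m i * x i
    set b := ∑ i ∈ Finset.Ico (p + 1) (m + 1), C m i * x i
    have htri : ‖b‖ ≤ ‖a + b‖ + ‖a‖ := by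
      calc ‖b‖ = ‖(a + b) - a‖ := by congr 1; ring
        _ ≤ ‖a + b‖ + ‖a‖ := norm_sub_le _ _
    rw [hsum] at htri
    have : ε - ε / 4 ≤ ‖b‖ := by rw [hnico]; exact hicoge
    linarith
  -- contradiction
  have hgt : Tendsto (fun k => g (k + 1)) atTop atTop :=
    hgmono.tendsto_atTop.comp (tendsto_add_atTop_nat 1)
  have hsub := ((h x hxnorm).comp hgt).norm
  rw [show ‖(0:ℂ)‖ = 0 from norm_zero] at hsub
  have := hsub.eventually (eventually_lt_nhds (by linarith : (0:ℝ) < ε / 2))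
  obtain ⟨K, hK⟩ := this.exists
  exact absurd (hlow K) (not_le.mpr hK)

end Schur

/-- For `A` invertible lower triangular (with lower triangular inverse `Ainv`), the
following are equivalent: (i) `(A,B)` satisfies (*3C) (with `C = B A⁻¹`); (ii) on every
locally convex Hausdorff space, `A`-bounded sequences of operators are `B`-null;
(iii) `A`-bounded sequences of operators on `ℓ∞` are `B`-null; (iv) the sequence
`𝒮 = ((A⁻¹S)_n)_n` on `ℓ∞`, `S` the backward shift, is `B`-null. -/
theorem statement8 (A B Ainv : Mat) (hA : A.LowerTri) (hB : B.LowerTri)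
    (hdiag : ∀ n : ℕ, A n n ≠ 0) (hAinv : Ainv.LowerTri)
    (hleft : Mat.mul Ainv A = Mat.one) (hright : Mat.mul A Ainv = Mat.one) :
    [(Mat.mul B Ainv).Star3C,
      ∀ (E : Type) [AddCommGroup E] [Module ℂ E] [UniformSpace E] [IsUniformAddGroup E]
        [ContinuousSMul ℂ E] [LocallyConvexSpace ℝ E] [T2Space E],
        ∀ T : ℕ → E →L[ℂ] E, MatBounded A T → MatNull B T,
      ∀ T : ℕ → ellInf →L[ℂ] ellInf, MatBounded A T → MatNull B T,
      ∀ Sop : ellInf →L[ℂ] ellInf, (∀ (x : ellInf) (k : ℕ), Sop x k = x (k + 1)) →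
        MatNull B (matOp Ainv fun i => Sop ^ i)].TFAE := by
  have hCA : Mat.mul (Mat.mul B Ainv) A = B := by
    rw [Mat.mul_assoc' B Ainv A hAinv, hleft, Mat.mul_one' B hB]
  tfae_have 1 → 2 := by
    intro h1 E _ _ _ _ _ _ _ T hT x
    have key : ∀ n, matOp B T n x
        = ∑ j ∈ Finset.range (n + 1), (Mat.mul B Ainv) n j • matOp A T j x := by
      intro n
      conv_lhs => rw [← hCA]
      rw [matOp_mul_s8 _ A hA T n, ContinuousLinearMap.sum_apply]
      simp only [ContinuousLinearMap.smul_apply]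
    exact Tendsto.congr (fun n => (key n).symm)
      (star3C_null _ h1 (fun j => matOp A T j) hT x)
  tfae_have 2 → 3 := by
    intro h2
    exact @h2 ellInf _ _ _ _ _ (NormedSpace.toLocallyConvexSpace' ℂ) _
  tfae_have 3 → 4 := by
    intro h3 Sop hS
    have hpow : ∀ n, matOp A (matOp Ainv fun i => Sop ^ i) n = Sop ^ n := by
      intro n
      rw [show matOp A (matOp Ainv fun i => Sop ^ i) n
          = matOp (Mat.mul A Ainv) (fun i => Sop ^ i) n from
        (matOp_mul_s8 A Ainv hAinv _ n).symm, hright, matOp_one]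
    apply h3
    have hiff := (NormedSpace.equicontinuous_TFAE
      (fun n => matOp A (matOp Ainv fun i => Sop ^ i) n)).out 5 1
    exact hiff.mp ⟨1, fun n => by rw [hpow n]; exact shift_pow_norm_le Sop hS n⟩
  tfae_have 4 → 1 := by
    intro h4
    have hnull := h4 shiftOp shiftOp_apply
    have key : ∀ x : ℕ → ℂ, (∀ i, ‖x i‖ ≤ 1) →
        Tendsto (fun n => ∑ i ∈ Finset.range (n + 1), (Mat.mul B Ainv) n i * x i)
          atTop (𝓝 (0 : ℂ)) := by
      intro x hx
      set xl : ellInf := ⟨x, memℓp_infty ⟨1, by rintro r ⟨i, rfl⟩; exact hx i⟩⟩ with hxl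
      have hnx := (hnull xl).norm
      rw [norm_zero] at hnx
      apply squeeze_zero_norm _ hnx
      intro n
      have heq : matOp B (matOp Ainv fun i => shiftOp ^ i) n
          = matOp (Mat.mul B Ainv) (fun i => shiftOp ^ i) n :=
        (matOp_mul_s8 B Ainv hAinv _ n).symm
      have hcoord : ((matOp (Mat.mul B Ainv) (fun i => shiftOp ^ i) n xl : ellInf) : ℕ → ℂ) 0
          = ∑ i ∈ Finset.range (n + 1), (Mat.mul B Ainv) n i * x i := by
        rw [matOp_pow_coord_zero _ shiftOp shiftOp_apply n xl]
      rw [← hcoord, ← heq]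
      exact lp.norm_apply_le_norm ENNReal.top_ne_zero _ 0
    unfold Mat.Star3C Mat.rowSum
    exact schur_lemma _ key
  tfae_finish
end
end

section
/- (Eberlein-type mean ergodic theorem) Let A be a probability matrix, E a locally convex Hausdorff topological vector space over ℂ, and T an A-bounded continuous linear operator on E. Suppose x₀ ∈ E satisfies lim_{n→∞} (T − id)(AT)_n x₀ = 0 and lim_{n→∞} (AT)_n (T − id) x₀ = 0. Then for each y ∈ E the following are equivalent: (i) Ty = y and y belongs to the closed convex hull of {T^n x₀ : n ∈ ℕ}; (ii) y = lim_{n→∞} (AT)_n x₀ in E; (iii) y = lim_{n→∞} (AT)_n x₀ in the weak topology σ(E,E'); (iv) y is a cluster point, for the weak topology σ(E,E'), of the sequence ((AT)_n x₀)_n. -/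
open Filter Finset Topology ZeroAtInfty
open scoped ENNReal ComplexOrder

noncomputable section

section AuxProof

open scoped Uniformity

variable {E : Type*} [AddCommGroup E] [Module ℂ E] [UniformSpace E]
  [IsUniformAddGroup E] [ContinuousSMul ℂ E]

lemma matOpPow_apply (A : Mat) (T : E →L[ℂ] E) (n : ℕ) (v : E) :
    matOpPow A T n v = ∑ i ∈ Finset.range (n + 1), A n i • (T ^ i) v := by
  simp [matOpPow, matOp, ContinuousLinearMap.sum_apply]

lemma matOpPow_comm_pow (A : Mat) (T : E →L[ℂ] E) (n j : ℕ) (v : E) :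
    matOpPow A T n ((T ^ j) v) = (T ^ j) (matOpPow A T n v) := by
  simp only [matOpPow_apply, map_sum, map_smul]
  refine Finset.sum_congr rfl fun i _ => ?_
  congr 1
  rw [← ContinuousLinearMap.mul_apply, ← ContinuousLinearMap.mul_apply, pow_mul_comm]

lemma tendsto_zero_of_closure {F : ℕ → E →L[ℂ] E}
    (hF : Equicontinuous fun n => ⇑(F n)) {s : Set E}
    (hs : ∀ w ∈ s, Tendsto (fun n => F n w) atTop (𝓝 (0 : E)))
    {w : E} (hw : w ∈ closure s) :
    Tendsto (fun n => F n w) atTop (𝓝 (0 : E)) := by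
  rw [tendsto_def]
  intro V hV
  obtain ⟨V₀, hV₀, hV₀V⟩ := exists_nhds_zero_half hV
  have hU : {p : E × E | p.2 - p.1 ∈ V₀} ∈ 𝓤 E := by
    rw [uniformity_eq_comap_nhds_zero E]
    exact preimage_mem_comap hV₀
  have hEq := hF 0 _ hU
  simp only [map_zero, Set.mem_setOf_eq, sub_zero] at hEq
  have hcont : Tendsto (fun x : E => w - x) (𝓝 w) (𝓝 (0 : E)) := by
    have h' : Tendsto (fun x : E => w - x) (𝓝 w) (𝓝 (w - w)) :=
      tendsto_const_nhds.sub tendsto_id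
    simpa using h'
  obtain ⟨w', hw'⟩ := mem_closure_iff_nhds.1 hw _ (hcont hEq)
  have h2 : ∀ n, F n (w - w') ∈ V₀ := hw'.1
  have h1 := tendsto_def.1 (hs w' hw'.2) _ hV₀
  filter_upwards [h1] with n hn
  have hrw : F n w = F n w' + F n (w - w') := by rw [map_sub]; abel
  show F n w ∈ V
  rw [hrw]
  exact hV₀V _ hn _ (h2 n)

lemma matOpPow_mem_convexHull (A : Mat) (hA : A.IsProb) (T : E →L[ℂ] E) (x₀ : E) (n : ℕ) :
    matOpPow A T n x₀ ∈ convexHull ℝ (Set.range fun i : ℕ => (T ^ i) x₀) := by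
  have hre : ∀ i, A n i = (((A n i).re : ℝ) : ℂ) := by
    intro i
    have h := (Complex.nonneg_iff.mp (hA.2.1 n i)).2
    exact Complex.ext (by simp) (by simp [← h])
  have hw0 : ∀ i, 0 ≤ (A n i).re := fun i => (Complex.nonneg_iff.mp (hA.2.1 n i)).1
  have hw1 : ∑ i ∈ Finset.range (n + 1), (A n i).re = 1 := by
    have h' := congrArg Complex.re (hA.2.2 n)
    simpa [Complex.re_sum] using h'
  have heq : matOpPow A T n x₀ = ∑ i ∈ Finset.range (n + 1), (A n i).re • (T ^ i) x₀ := by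
    rw [matOpPow_apply]
    refine Finset.sum_congr rfl fun i _ => ?_
    conv_lhs => rw [hre i]
    rw [Complex.coe_smul]
  rw [heq, ← Finset.centerMass_eq_of_sum_1 _ _ hw1]
  exact Finset.centerMass_mem_convexHull _ (fun i _ => hw0 i) (by rw [hw1]; norm_num)
    (fun i _ => Set.mem_range_self i)

lemma matOpPow_fixed (A : Mat) (hA : A.IsProb) (T : E →L[ℂ] E) {y : E} (hy : T y = y) (n : ℕ) :
    matOpPow A T n y = y := by
  have hp : ∀ i, (T ^ i) y = y := by
    intro i
    induction i with
    | zero => simp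
    | succ k ih => rw [pow_succ, ContinuousLinearMap.mul_apply, hy, ih]
  rw [matOpPow_apply]
  simp only [hp]
  rw [← Finset.sum_smul, hA.2.2 n, one_smul]

end AuxProof

/-- Eberlein-type mean ergodic theorem: for a probability matrix `A`, an `A`-bounded
operator `T` and a point `x₀` with `(T - id)(AT)_n x₀ → 0` and `(AT)_n (T - id) x₀ → 0`,
the following are equivalent for every `y`: (i) `Ty = y` and `y` is in the closed convex
hull of `{Tⁿx₀}`; (ii) `(AT)_n x₀ → y`; (iii) `(AT)_n x₀ → y` weakly; (iv) `y` is a weak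
cluster point of `((AT)_n x₀)_n`. -/
theorem statement9 {E : Type*} [AddCommGroup E] [Module ℂ E] [UniformSpace E]
    [IsUniformAddGroup E] [ContinuousSMul ℂ E] [LocallyConvexSpace ℝ E] [T2Space E]
    (A : Mat) (hA : A.IsProb) (T : E →L[ℂ] E) (hT : OpBounded A T) (x₀ : E)
    (h1 : Tendsto (fun n => T (matOpPow A T n x₀) - matOpPow A T n x₀) atTop (𝓝 (0 : E)))
    (h2 : Tendsto (fun n => matOpPow A T n (T x₀ - x₀)) atTop (𝓝 (0 : E))) (y : E) :
    [T y = y ∧ y ∈ closure (convexHull ℝ (Set.range fun n : ℕ => (T ^ n) x₀)),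
      Tendsto (fun n => matOpPow A T n x₀) atTop (𝓝 y),
      Tendsto (fun n => toWeakSpace ℂ E (matOpPow A T n x₀)) atTop
        (𝓝 (toWeakSpace ℂ E y)),
      MapClusterPt (toWeakSpace ℂ E y) atTop
        fun n => toWeakSpace ℂ E (matOpPow A T n x₀)].TFAE := by
  classical
  have hR : ContinuousSMul ℝ E := IsScalarTower.continuousSMul ℂ
  have hwT2 : T2Space (WeakSpace ℂ E) := by
    refine (t2Space_iff _).2 fun {a b} hab => ?_
    obtain ⟨f, hf⟩ := RCLike.geometric_hahn_banach_point_point (𝕜 := ℂ) (E := E)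
      (x := (toWeakSpace ℂ E).symm a) (y := (toWeakSpace ℂ E).symm b)
      (fun h => hab (by simpa using congrArg (toWeakSpace ℂ E) h))
    have hfc : Continuous fun v : WeakSpace ℂ E => f ((toWeakSpace ℂ E).symm v) :=
      WeakBilin.eval_continuous ((topDualPairing ℂ E).flip) f
    exact separated_by_continuous hfc fun h => by rw [h] at hf; exact lt_irrefl _ hf
  set S : Set E := Set.range fun i : ℕ => (T ^ i) x₀ with hS
  tfae_have 1 → 2 := by
    rintro ⟨hy, hcl⟩
    set C : Set E := {v : E | Tendsto (fun n => matOpPow A T n (x₀ - v)) atTop (𝓝 (0 : E))}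
      with hC
    have hSC : S ⊆ C := by
      rintro _ ⟨i, rfl⟩
      show Tendsto (fun n => matOpPow A T n (x₀ - (T ^ i) x₀)) atTop (𝓝 (0 : E))
      have hxi : x₀ - (T ^ i) x₀ = ∑ j ∈ Finset.range i, (T ^ j) (x₀ - T x₀) := by
        have h0 : ((T : E →L[ℂ] E) ^ 0) x₀ = x₀ := by simp
        calc x₀ - (T ^ i) x₀ = (T ^ 0) x₀ - (T ^ i) x₀ := by rw [h0]
        _ = ∑ j ∈ Finset.range i, ((T ^ j) x₀ - (T ^ (j + 1)) x₀) :=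
            (Finset.sum_range_sub' (fun j => (T ^ j) x₀) i).symm
        _ = ∑ j ∈ Finset.range i, (T ^ j) (x₀ - T x₀) := by
            refine Finset.sum_congr rfl fun j _ => ?_
            rw [map_sub, pow_succ, ContinuousLinearMap.mul_apply]
      have hneg : Tendsto (fun n => matOpPow A T n (x₀ - T x₀)) atTop (𝓝 (0 : E)) := by
        have hpt : ∀ n, matOpPow A T n (x₀ - T x₀) = -(matOpPow A T n (T x₀ - x₀)) :=
          fun n => by rw [← neg_sub, map_neg]
        simp only [hpt]
        simpa using h2.neg
      have hterm : ∀ j : ℕ,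
          Tendsto (fun n => (T ^ j) (matOpPow A T n (x₀ - T x₀))) atTop (𝓝 (0 : E)) := by
        intro j
        have := ((T ^ j).continuous.tendsto 0).comp hneg
        simpa [Function.comp_def] using this
      have hrw : ∀ n, matOpPow A T n (x₀ - (T ^ i) x₀)
          = ∑ j ∈ Finset.range i, (T ^ j) (matOpPow A T n (x₀ - T x₀)) := by
        intro n
        rw [hxi, map_sum]
        refine Finset.sum_congr rfl fun j _ => ?_
        rw [matOpPow_comm_pow]
      simp only [hrw]
      have hsum := tendsto_finset_sum (Finset.range i) fun j _ => hterm j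
      simpa using hsum
    have hCconv : Convex ℝ C := by
      intro v1 hv1 v2 hv2 a b ha hb hab
      have key : ∀ n, matOpPow A T n (x₀ - (a • v1 + b • v2))
          = a • matOpPow A T n (x₀ - v1) + b • matOpPow A T n (x₀ - v2) := by
        intro n
        have hx : x₀ - (a • v1 + b • v2) = a • (x₀ - v1) + b • (x₀ - v2) := by
          have h' : a • (x₀ - v1) + b • (x₀ - v2) = (a + b) • x₀ - (a • v1 + b • v2) := by
            rw [smul_sub, smul_sub, add_smul]; abel
          rw [h', hab, one_smul]
        rw [hx, map_add, ContinuousLinearMap.map_smul_of_tower,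
          ContinuousLinearMap.map_smul_of_tower]
      show Tendsto (fun n => matOpPow A T n (x₀ - (a • v1 + b • v2))) atTop (𝓝 (0 : E))
      simp only [key]
      have hv1' : Tendsto (fun n => matOpPow A T n (x₀ - v1)) atTop (𝓝 (0 : E)) := hv1
      have hv2' : Tendsto (fun n => matOpPow A T n (x₀ - v2)) atTop (𝓝 (0 : E)) := hv2
      simpa using (hv1'.const_smul a).add (hv2'.const_smul b)
    have hhull : convexHull ℝ S ⊆ C := convexHull_min hSC hCconv
    have hyC : Tendsto (fun n => matOpPow A T n (x₀ - y)) atTop (𝓝 (0 : E)) := by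
      refine tendsto_zero_of_closure hT (s := (fun v : E => x₀ - v) '' convexHull ℝ S) ?_ ?_
      · rintro w ⟨v, hv, rfl⟩
        exact hhull hv
      · have hc : Continuous fun v : E => x₀ - v := continuous_const.sub continuous_id
        exact image_closure_subset_closure_image hc ⟨y, hcl, rfl⟩
    have heq : ∀ n, matOpPow A T n x₀ = matOpPow A T n (x₀ - y) + y := by
      intro n
      rw [map_sub, matOpPow_fixed A hA T hy n]; abel
    rw [show (𝓝 y) = 𝓝 ((0 : E) + y) by rw [zero_add]]
    simp only [heq]
    exact hyC.add tendsto_const_nhds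
  tfae_have 2 → 3 := by
    intro h
    have := ((toWeakSpaceCLM ℂ E).continuous.tendsto y).comp h
    simpa [Function.comp_def, toWeakSpaceCLM_eq_toWeakSpace] using this
  tfae_have 3 → 4 := fun h => h.mapClusterPt
  tfae_have 4 → 1 := by
    intro h4
    have hφ : Continuous fun v : WeakSpace ℂ E => WeakSpace.map T v - v :=
      (WeakSpace.map T).continuous.sub continuous_id
    have h5 := h4.continuousAt_comp hφ.continuousAt
    have h5' : MapClusterPt (toWeakSpace ℂ E (T y - y)) atTop
        (fun n => toWeakSpace ℂ E (T (matOpPow A T n x₀) - matOpPow A T n x₀)) := h5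
    have h6 : Tendsto (fun n => toWeakSpace ℂ E (T (matOpPow A T n x₀) - matOpPow A T n x₀))
        atTop (𝓝 (0 : WeakSpace ℂ E)) := by
      have := ((toWeakSpaceCLM ℂ E).continuous.tendsto 0).comp h1
      simpa [Function.comp_def, toWeakSpaceCLM_eq_toWeakSpace] using this
    have h8 : toWeakSpace ℂ E (T y - y) = 0 := by
      have hne : ClusterPt (toWeakSpace ℂ E (T y - y)) (𝓝 (0 : WeakSpace ℂ E)) :=
        h5'.clusterPt.mono h6
      exact t2_iff_nhds.mp hwT2 hne
    have hTy : T y = y := by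
      have := (toWeakSpace ℂ E).injective (h8.trans (map_zero (toWeakSpace ℂ E)).symm)
      exact sub_eq_zero.mp this
    refine ⟨hTy, ?_⟩
    have hzconv : ∀ n, matOpPow A T n x₀ ∈ convexHull ℝ S :=
      fun n => matOpPow_mem_convexHull A hA T x₀ n
    have hwy : toWeakSpace ℂ E y ∈ closure (toWeakSpace ℂ E '' convexHull ℝ S) := by
      refine mem_closure_iff_clusterPt.2 (h4.clusterPt.mono ?_)
      exact le_principal_iff.2 (Filter.mem_map.2 (Filter.Eventually.of_forall
        fun n => Set.mem_image_of_mem _ (hzconv n)))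
    rw [← (convex_convexHull ℝ S).toWeakSpace_closure (𝕜 := ℂ)] at hwy
    obtain ⟨y', hy', hyy'⟩ := hwy
    exact ((toWeakSpace ℂ E).injective hyy') ▸ hy'
  tfae_finish
end
end

section
/- Let A be a probability matrix, E a locally convex Hausdorff topological vector space over ℂ, and T an A-bounded continuous linear operator on E such that for every x ∈ E one has lim_{n→∞} (T − id)(AT)_n x = 0 and lim_{n→∞} (AT)_n (T − id) x = 0. Then T is A-ergodic if and only if for every x ∈ E the set {(AT)_n x : n ∈ ℕ} is relatively compact in the weak topology σ(E,E'). -/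
open Filter Finset Topology ZeroAtInfty
open scoped ENNReal ComplexOrder

noncomputable section

section AuxiliaryErgodic

open scoped Uniformity

variable {E : Type*} [AddCommGroup E] [Module ℂ E] [UniformSpace E]
  [IsUniformAddGroup E] [ContinuousSMul ℂ E]

omit [Module ℂ E] [ContinuousSMul ℂ E] in
lemma aux_equi_nhds {f : ℕ → E → E} (hf : Equicontinuous f) (z : E) {V : Set E}
    (hV : V ∈ 𝓝 (0 : E)) : ∀ᶠ x' in 𝓝 z, ∀ n, f n x' - f n z ∈ V := by
  have hU : {p : E × E | p.2 - p.1 ∈ V} ∈ 𝓤 E := by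
    rw [uniformity_eq_comap_nhds_zero]; exact Filter.preimage_mem_comap hV
  exact hf z _ hU

omit [Module ℂ E] [ContinuousSMul ℂ E] in
lemma aux_equi_nhds' {f : ℕ → E → E} (hf : Equicontinuous f) (z : E) {V : Set E}
    (hV : V ∈ 𝓝 (0 : E)) : ∀ᶠ x' in 𝓝 z, ∀ n, f n z - f n x' ∈ V := by
  have hU : {p : E × E | p.1 - p.2 ∈ V} ∈ 𝓤 E := by
    rw [uniformity_eq_comap_nhds_zero_swapped]; exact Filter.preimage_mem_comap hV
  exact hf z _ hU

lemma aux_tendsto_zero_closed {f : ℕ → E →L[ℂ] E} (hf : Equicontinuous fun n => ⇑(f n))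
    {z : E} (hz : z ∈ closure {w : E | Tendsto (fun n => f n w) atTop (𝓝 (0 : E))}) :
    Tendsto (fun n => f n z) atTop (𝓝 (0 : E)) := by
  rw [Filter.tendsto_def]
  intro U hU
  obtain ⟨V, hV, hVU⟩ := exists_nhds_zero_half hU
  have hW : {x' | ∀ n, f n z - f n x' ∈ V} ∈ 𝓝 z := aux_equi_nhds' hf z hV
  obtain ⟨m, hm1, hm2⟩ := mem_closure_iff_nhds.1 hz _ hW
  have hev : ∀ᶠ n in atTop, f n m ∈ V := hm2.eventually_mem hV
  filter_upwards [hev] with n hn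
  have heq : f n z = (f n z - f n m) + f n m := by abel
  simp only [Set.mem_preimage]
  rw [heq]
  exact hVU _ (hm1 n) _ hn

lemma aux_weak_t2 [LocallyConvexSpace ℝ E] [T2Space E] : T2Space (WeakSpace ℂ E) := by
  refine ⟨fun x y hxy => ?_⟩
  obtain ⟨f, hf⟩ := RCLike.geometric_hahn_banach_point_point (𝕜 := ℂ) (E := E)
    (x := (toWeakSpace ℂ E).symm x) (y := (toWeakSpace ℂ E).symm y)
    (fun h => hxy ((toWeakSpace ℂ E).symm.injective h))
  exact separated_by_continuous (WeakBilin.eval_continuous _ f) (fun h => by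
    rw [show f ((toWeakSpace ℂ E).symm x) = f ((toWeakSpace ℂ E).symm y) from h] at hf
    exact lt_irrefl _ hf)

lemma aux_matOpPow_apply (A : Mat) (T : E →L[ℂ] E) (n : ℕ) (x : E) :
    matOpPow A T n x = ∑ i ∈ Finset.range (n + 1), A n i • (T ^ i) x := by
  simp [matOpPow, matOp, ContinuousLinearMap.sum_apply]

lemma aux_decomp (A : Mat) (hrow : ∀ n : ℕ, ∑ i ∈ Finset.range (n+1), A n i = 1)
    (T : E →L[ℂ] E) (n : ℕ) (x : E) :
    (T - 1 : E →L[ℂ] E) (∑ i ∈ Finset.range (n+1), A n i • ∑ j ∈ Finset.range i, (T ^ j) x)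
      = matOpPow A T n x - x := by
  rw [map_sum]
  have key : ∀ i, (T - 1 : E →L[ℂ] E) (A n i • ∑ j ∈ Finset.range i, (T ^ j) x)
      = A n i • ((T ^ i) x - x) := by
    intro i
    rw [map_smul]
    congr 1
    rw [map_sum]
    have hj : ∀ j, (T - 1 : E →L[ℂ] E) ((T ^ j) x) = (T ^ (j+1)) x - (T ^ j) x := by
      intro j
      simp [ContinuousLinearMap.sub_apply, pow_succ', ContinuousLinearMap.mul_apply]
    simp_rw [hj]
    rw [Finset.sum_range_sub (fun j => (T ^ j) x)]
    simp
  simp_rw [key, smul_sub]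
  rw [Finset.sum_sub_distrib, ← Finset.sum_smul, hrow n, one_smul, aux_matOpPow_apply]

end AuxiliaryErgodic

/-- For a probability matrix `A` and an `A`-bounded operator `T` with
`(T - id)(AT)_n x → 0` and `(AT)_n (T - id) x → 0` for every `x`, the operator `T` is
`A`-ergodic iff every orbit `{(AT)_n x : n}` is relatively compact for the weak
topology `σ(E, E')`. -/
theorem statement10 {E : Type*} [AddCommGroup E] [Module ℂ E] [UniformSpace E]
    [IsUniformAddGroup E] [ContinuousSMul ℂ E] [LocallyConvexSpace ℝ E] [T2Space E]
    (A : Mat) (hA : A.IsProb) (T : E →L[ℂ] E) (hT : OpBounded A T)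
    (h1 : ∀ x : E,
      Tendsto (fun n => T (matOpPow A T n x) - matOpPow A T n x) atTop (𝓝 (0 : E)))
    (h2 : ∀ x : E, Tendsto (fun n => matOpPow A T n (T x - x)) atTop (𝓝 (0 : E))) :
    OpErgodic A T ↔ ∀ x : E,
      IsCompact (closure (Set.range fun n : ℕ => toWeakSpace ℂ E (matOpPow A T n x))) := by
  classical
  haveI : ContinuousSMul ℝ E := IsScalarTower.continuousSMul ℂ
  have hrow : ∀ n : ℕ, ∑ i ∈ Finset.range (n+1), A n i = 1 := hA.2.2
  haveI : T2Space (WeakSpace ℂ E) := aux_weak_t2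
  constructor
  · rintro ⟨P, hP⟩ x
    have ht : Tendsto (fun n => toWeakSpace ℂ E (matOpPow A T n x)) atTop
        (𝓝 (toWeakSpace ℂ E (P x))) :=
      ((toWeakSpaceCLM ℂ E).continuous.tendsto _).comp (hP x)
    have hcpt := ht.isCompact_insert_range
    exact hcpt.of_isClosed_subset isClosed_closure
      (closure_minimal (Set.subset_insert _ _) hcpt.isClosed)
  · intro hcomp
    set S : Submodule ℂ E := LinearMap.range ((T - 1 : E →L[ℂ] E) : E →ₗ[ℂ] E) with hSdef
    have hSsubM : (S : Set E) ⊆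
        {w : E | Tendsto (fun n => matOpPow A T n w) atTop (𝓝 (0 : E))} := by
      rintro _ ⟨w, rfl⟩
      have he : (T - 1 : E →L[ℂ] E) w = T w - w := by
        simp [ContinuousLinearMap.sub_apply]
      rw [ContinuousLinearMap.coe_coe, he]
      exact h2 w
    have hdecomp : ∀ (n : ℕ) (x : E), x - matOpPow A T n x ∈ (S : Set E) := by
      intro n x
      refine ⟨-(∑ i ∈ Finset.range (n+1), A n i • ∑ j ∈ Finset.range i, (T ^ j) x), ?_⟩
      rw [map_neg, ContinuousLinearMap.coe_coe, aux_decomp A hrow T n x, neg_sub]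
    have key : ∀ x : E, ∃ y : E, Tendsto (fun n => matOpPow A T n x) atTop (𝓝 y) := by
      intro x
      set g : ℕ → WeakSpace ℂ E := fun n => toWeakSpace ℂ E (matOpPow A T n x) with hg
      haveI hne : (Filter.map g atTop).NeBot := Filter.map_neBot
      have hle : Filter.map g atTop ≤ Filter.principal (closure (Set.range g)) :=
        le_principal_iff.2 (Filter.mem_map.2
          (Filter.Eventually.of_forall fun n => subset_closure ⟨n, rfl⟩))
      obtain ⟨y', _, hy'⟩ := hcomp x hle
      set F : Filter ℕ := atTop ⊓ Filter.comap g (𝓝 y') with hFdef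
      haveI hFne : F.NeBot := by
        have h1' : (Filter.map g F).NeBot := by
          rw [hFdef, Filter.push_pull]
          rw [ClusterPt] at hy'
          rwa [inf_comm] at hy'
        exact h1'.of_map
      have hFle : F ≤ atTop := inf_le_left
      have hgF : Tendsto g F (𝓝 y') := by
        rw [Filter.tendsto_iff_comap]; exact inf_le_right
      set y : E := (toWeakSpace ℂ E).symm y' with hydef
      have hy'y : toWeakSpace ℂ E y = y' := (toWeakSpace ℂ E).apply_symm_apply y'
      -- x - y lies in the closure of S
      have hxy : x - y ∈ closure (S : Set E) := by
        by_contra hc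
        have hconv : Convex ℝ (closure (S : Set E)) := by
          have : Convex ℝ (S : Set E) := by
            simpa using (S.restrictScalars ℝ).convex
          exact this.closure
        obtain ⟨φ, u, hφ1, hφ2⟩ := RCLike.geometric_hahn_banach_closed_point
          (𝕜 := ℂ) (E := E) hconv isClosed_closure hc
        have hψ : Continuous fun z : WeakSpace ℂ E =>
            RCLike.re (φ ((toWeakSpace ℂ E).symm z)) :=
          RCLike.continuous_re.comp (WeakBilin.eval_continuous _ φ)
        have h1' : Tendsto (fun n => toWeakSpace ℂ E (x - matOpPow A T n x)) F
            (𝓝 (toWeakSpace ℂ E (x - y))) := by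
          have h0 : Tendsto (fun n => toWeakSpace ℂ E x - g n) F
              (𝓝 (toWeakSpace ℂ E x - y')) := Tendsto.const_sub _ hgF
          have e1 : (fun n => toWeakSpace ℂ E x - g n)
              = fun n => toWeakSpace ℂ E (x - matOpPow A T n x) := by
            funext n; rw [map_sub]
          have e2 : toWeakSpace ℂ E x - y' = toWeakSpace ℂ E (x - y) := by
            rw [map_sub, hy'y]
          rwa [e1, e2] at h0
        have h2' : Tendsto (fun n => RCLike.re (φ (x - matOpPow A T n x))) F
            (𝓝 (RCLike.re (φ (x - y)))) := by
          have hc := (hψ.tendsto (toWeakSpace ℂ E (x - y))).comp h1'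
          have e : ((fun z : WeakSpace ℂ E => RCLike.re (φ ((toWeakSpace ℂ E).symm z))) ∘
              fun n => toWeakSpace ℂ E (x - matOpPow A T n x))
              = fun n => RCLike.re (φ (x - matOpPow A T n x)) := by
            funext n; simp [Function.comp]
          have e2 : RCLike.re (φ ((toWeakSpace ℂ E).symm (toWeakSpace ℂ E (x - y))))
              = RCLike.re (φ (x - y)) := by simp
          rw [e, e2] at hc
          exact hc
        have hlt : ∀ n, RCLike.re (φ (x - matOpPow A T n x)) < u := fun n =>
          hφ1 _ (subset_closure (hdecomp n x))
        have hle' : RCLike.re (φ (x - y)) ≤ u :=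
          le_of_tendsto h2' (Filter.Eventually.of_forall fun n => (hlt n).le)
        exact absurd (hφ2.trans_le hle') (lt_irrefl u)
      have hxyM : Tendsto (fun n => matOpPow A T n (x - y)) atTop (𝓝 (0 : E)) :=
        aux_tendsto_zero_closed hT (closure_mono hSsubM hxy)
      -- T y = y
      have hTy : T y = y := by
        have ha : Tendsto (fun n => toWeakSpace ℂ E (T (matOpPow A T n x))) F
            (𝓝 (toWeakSpace ℂ E (T y))) := by
          have := ((WeakSpace.map T).continuous.tendsto y').comp hgF
          have e : (fun n => WeakSpace.map T (g n))
              = fun n => toWeakSpace ℂ E (T (matOpPow A T n x)) := by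
            funext n; rfl
          have e2 : WeakSpace.map T y' = toWeakSpace ℂ E (T y) := by
            rw [← hy'y]; rfl
          rw [← e, ← e2]
          exact this
        have hb : Tendsto (fun n => toWeakSpace ℂ E (T (matOpPow A T n x))) F
            (𝓝 (toWeakSpace ℂ E y)) := by
          have hd : Tendsto (fun n => T (matOpPow A T n x) - matOpPow A T n x) F
              (𝓝 (0 : E)) := (h1 x).mono_left hFle
          have hsum : Tendsto (fun n => g n +
              toWeakSpace ℂ E (T (matOpPow A T n x) - matOpPow A T n x)) F
              (𝓝 (y' + toWeakSpace ℂ E 0)) :=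
            hgF.add (((toWeakSpaceCLM ℂ E).continuous.tendsto _).comp hd)
          have e : (fun n => g n
              + toWeakSpace ℂ E (T (matOpPow A T n x) - matOpPow A T n x))
              = fun n => toWeakSpace ℂ E (T (matOpPow A T n x)) := by
            funext n
            rw [map_sub]
            abel
          have e2 : y' + toWeakSpace ℂ E 0 = toWeakSpace ℂ E y := by
            rw [map_zero, add_zero, hy'y]
          rwa [e, e2] at hsum
        have := tendsto_nhds_unique ha hb
        exact (toWeakSpace ℂ E).injective this
      have hpowy : ∀ i : ℕ, (T ^ i) y = y := by
        intro i
        induction i with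
        | zero => simp
        | succ i ih =>
          rw [pow_succ, ContinuousLinearMap.mul_apply, hTy, ih]
      have hfny : ∀ n, matOpPow A T n y = y := by
        intro n
        rw [aux_matOpPow_apply]
        simp only [hpowy]
        rw [← Finset.sum_smul, hrow n, one_smul]
      refine ⟨y, ?_⟩
      have hfin : Tendsto (fun n => matOpPow A T n (x - y) + matOpPow A T n y) atTop
          (𝓝 ((0 : E) + y)) := by
        refine hxyM.add ?_
        simp only [hfny]
        exact tendsto_const_nhds
      have e : (fun n => matOpPow A T n (x - y) + matOpPow A T n y)
          = fun n => matOpPow A T n x := by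
        funext n
        rw [map_sub]
        abel
      rwa [e, zero_add] at hfin
    choose Pf hPf using key
    have hadd : ∀ x z : E, Pf (x + z) = Pf x + Pf z := by
      intro x z
      refine tendsto_nhds_unique (hPf (x + z)) ?_
      have := (hPf x).add (hPf z)
      simpa [map_add] using this
    have hsmul : ∀ (c : ℂ) (x : E), Pf (c • x) = c • Pf x := by
      intro c x
      refine tendsto_nhds_unique (hPf (c • x)) ?_
      have := (hPf x).const_smul c
      simpa [map_smul] using this
    have hcont : Continuous Pf := by
      rw [continuous_iff_continuousAt]
      intro z
      rw [ContinuousAt, ← tendsto_sub_nhds_zero_iff]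
      rw [Filter.tendsto_def]
      intro U hU
      obtain ⟨V, hVmem, hVc, hVU⟩ := exists_mem_nhds_isClosed_subset hU
      have hW := aux_equi_nhds (f := fun n => ⇑(matOpPow A T n)) hT z hVmem
      filter_upwards [hW] with x' hx'
      have hmem : Pf x' - Pf z ∈ V := by
        refine hVc.mem_of_tendsto ((hPf x').sub (hPf z))
          (Filter.Eventually.of_forall fun n => hx' n)
      exact hVU hmem
    let Pl : E →ₗ[ℂ] E :=
      { toFun := Pf
        map_add' := hadd
        map_smul' := fun c x => hsmul c x }
    exact ⟨⟨Pl, hcont⟩, hPf⟩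
end
end
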